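/- arXiv:2507.19018 — 4 statements merged into one kernel-verified Lean document; each statement's English description precedes it below -/
import Mathlib

section
/- If |ψ⟩ is an ε-approximate k-uniform state (every k-qudit reduced density matrix ρ_S satisfies Tr(ρ_S²) ≤ d^{-k} + ε²), then |ψ⟩ is a dε-approximate (k-1)-uniform state, i.e., every (k-1)-qudit reduced density matrix ρ_T satisfies Tr(ρ_T²) ≤ d^{-(k-1)} + (dε)². -/
open scoped BigOperators Matrix
open Matrix

noncomputable section

namespace ApproxKUniform

variable {n d : ℕ}

/-- Hilbert–Schmidt (Frobenius) norm of a square complex matrix. -/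
def hsNorm {α : Type*} [Fintype α] (A : Matrix α α ℂ) : ℝ :=
  Real.sqrt ((Aᴴ * A).trace).re

/-- Combine an assignment on a subset `S` of sites with one on its complement. -/
def glue (S : Finset (Fin n)) (a : {i : Fin n // i ∈ S} → Fin d)
    (c : {i : Fin n // i ∉ S} → Fin d) : Fin n → Fin d :=
  fun i => if h : i ∈ S then a ⟨i, h⟩ else c ⟨i, h⟩

/-- Partial trace (onto subsystem `S`) of an operator `M` on `n` qudits. -/
def optrace (S : Finset (Fin n)) (M : Matrix (Fin n → Fin d) (Fin n → Fin d) ℂ) :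
    Matrix ({i : Fin n // i ∈ S} → Fin d) ({i : Fin n // i ∈ S} → Fin d) ℂ :=
  Matrix.of fun a b => ∑ c : {i : Fin n // i ∉ S} → Fin d, M (glue S a c) (glue S b c)

/-- Reduced density matrix of a pure state `ψ` on subsystem `S`. -/
def rdm (S : Finset (Fin n)) (ψ : (Fin n → Fin d) → ℂ) :
    Matrix ({i : Fin n // i ∈ S} → Fin d) ({i : Fin n // i ∈ S} → Fin d) ℂ :=
  optrace S (Matrix.of fun x y => ψ x * star (ψ y))

/-- Purity `Tr (ρ_S²)` of the reduced state on subsystem `S`. -/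
def purity (S : Finset (Fin n)) (ψ : (Fin n → Fin d) → ℂ) : ℝ :=
  ((rdm S ψ * rdm S ψ).trace).re

/-- `ψ` is an ε-approximate k-uniform state (purity form):
`Tr(ρ_S²) ≤ 1/d^k + ε²` for every `S` of size `k`. -/
def IsApproxUniform (d : ℕ) {n : ℕ} (k : ℕ) (ε : ℝ) (ψ : (Fin n → Fin d) → ℂ) : Prop :=
  ∀ S : Finset (Fin n), S.card = k → purity S ψ ≤ 1 / (d : ℝ) ^ k + ε ^ 2

/-! ### Auxiliary constructions -/

/-- Extend an assignment on `T` to `insert j T` using value `m` at `j`. -/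
def extFun (j : Fin n) (T : Finset (Fin n)) (a : {i : Fin n // i ∈ T} → Fin d) (m : Fin d) :
    {i : Fin n // i ∈ insert j T} → Fin d :=
  fun i => if h : (i : Fin n) ∈ T then a ⟨i, h⟩ else m

/-- Extend an assignment on the complement of `insert j T` to the complement of `T`,
using value `m` at `j`. -/
def cFun (j : Fin n) (T : Finset (Fin n)) (m : Fin d)
    (c : {i : Fin n // i ∉ insert j T} → Fin d) : {i : Fin n // i ∉ T} → Fin d :=
  fun i => if h : (i : Fin n) ∈ insert j T then m else c ⟨i, h⟩

/-- The equivalence splitting off the `j` coordinate from the complement of `T`. -/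
def eC (j : Fin n) (T : Finset (Fin n)) (hj : j ∉ T) :
    (Fin d × ({i : Fin n // i ∉ insert j T} → Fin d)) ≃ ({i : Fin n // i ∉ T} → Fin d) where
  toFun p := cFun j T p.1 p.2
  invFun c := (c ⟨j, hj⟩, fun i => c ⟨i, fun h => i.2 (Finset.mem_insert_of_mem h)⟩)
  left_inv p := by
    obtain ⟨m, c⟩ := p
    refine Prod.ext ?_ ?_
    · simp [cFun]
    · funext i
      have hi : (i : Fin n) ∉ insert j T := i.2
      simp [cFun, hi]
  right_inv c := by
    funext i
    have hiT : (i : Fin n) ∉ T := i.2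
    by_cases h : (i : Fin n) ∈ insert j T
    · have hij : (i : Fin n) = j := by
        rcases Finset.mem_insert.mp h with h' | h'
        · exact h'
        · exact absurd h' hiT
      simp only [cFun, dif_pos h]
      congr 1
      exact Subtype.ext hij.symm
    · simp [cFun, h]

/-- The equivalence splitting off the `j` coordinate from `insert j T`. -/
def eS (j : Fin n) (T : Finset (Fin n)) (hj : j ∉ T) :
    (({i : Fin n // i ∈ T} → Fin d) × Fin d) ≃ ({i : Fin n // i ∈ insert j T} → Fin d) where
  toFun p := extFun j T p.1 p.2
  invFun b := (fun i => b ⟨i, Finset.mem_insert_of_mem i.2⟩, b ⟨j, Finset.mem_insert_self j T⟩)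
  left_inv p := by
    obtain ⟨a, m⟩ := p
    refine Prod.ext ?_ ?_
    · funext i
      have hi : (i : Fin n) ∈ T := i.2
      simp [extFun, hi]
    · simp [extFun, hj]
  right_inv b := by
    funext i
    have hiS : (i : Fin n) ∈ insert j T := i.2
    by_cases h : (i : Fin n) ∈ T
    · simp only [extFun, dif_pos h]
    · have hij : (i : Fin n) = j := by
        rcases Finset.mem_insert.mp hiS with h' | h'
        · exact h'
        · exact absurd h' h
      simp only [extFun, dif_neg h]
      congr 1
      exact Subtype.ext hij.symm

lemma glue_split (j : Fin n) (T : Finset (Fin n))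
    (a : {i : Fin n // i ∈ T} → Fin d) (m : Fin d)
    (c : {i : Fin n // i ∉ insert j T} → Fin d) :
    glue T a (cFun j T m c) = glue (insert j T) (extFun j T a m) c := by
  funext i
  by_cases h1 : i ∈ T
  · have h2 : i ∈ insert j T := Finset.mem_insert_of_mem h1
    simp [glue, extFun, h1, h2]
  · by_cases h2 : i ∈ insert j T
    · simp [glue, extFun, cFun, h1, h2]
    · simp [glue, cFun, h1, h2]

lemma rdm_marginal (j : Fin n) (T : Finset (Fin n)) (hj : j ∉ T)
    (ψ : (Fin n → Fin d) → ℂ) (a b : {i : Fin n // i ∈ T} → Fin d) :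
    rdm T ψ a b
      = ∑ m : Fin d, rdm (insert j T) ψ (extFun j T a m) (extFun j T b m) := by
  simp only [rdm, optrace, Matrix.of_apply]
  rw [← Equiv.sum_comp (eC j T hj)
      (fun c => ψ (glue T a c) * star (ψ (glue T b c))), Fintype.sum_prod_type]
  refine Finset.sum_congr rfl fun m _ => Finset.sum_congr rfl fun c _ => ?_
  have : (eC (d := d) j T hj) (m, c) = cFun j T m c := rfl
  rw [this, glue_split, glue_split]

lemma rdm_herm (S : Finset (Fin n)) (ψ : (Fin n → Fin d) → ℂ)
    (a b : {i : Fin n // i ∈ S} → Fin d) :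
    rdm S ψ b a = starRingEnd ℂ (rdm S ψ a b) := by
  simp only [rdm, optrace, Matrix.of_apply, map_sum, _root_.map_mul]
  refine Finset.sum_congr rfl fun c _ => ?_
  simp [mul_comm, Complex.conj_conj]

lemma purity_eq (S : Finset (Fin n)) (ψ : (Fin n → Fin d) → ℂ) :
    purity S ψ = ∑ a, ∑ b, ‖rdm S ψ a b‖ ^ 2 := by
  have key : ∀ a b, rdm S ψ a b * rdm S ψ b a = ((‖rdm S ψ a b‖ ^ 2 : ℝ) : ℂ) := by
    intro a b
    rw [rdm_herm S ψ a b, Complex.mul_conj]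
    simp [Complex.normSq_eq_norm_sq]
  simp only [purity, Matrix.trace, Matrix.diag_apply, Matrix.mul_apply, key]
  simp only [Complex.re_sum, Complex.ofReal_re]

/-- An ε-approximate k-uniform state is also a dε-approximate
(k−1)-uniform state. -/
theorem approxUniform_step_down {n d k : ℕ} (hd : 0 < d) (hk : 1 ≤ k) (hkn : k ≤ n)
    (ε : ℝ) (hε : 0 ≤ ε) (ψ : (Fin n → Fin d) → ℂ)
    (hnorm : ∑ x, ‖ψ x‖ ^ 2 = 1)
    (h : IsApproxUniform d k ε ψ) :
    IsApproxUniform d (k - 1) ((d : ℝ) * ε) ψ := by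
  intro T hT
  obtain ⟨j, hj⟩ : ∃ j, j ∉ T := by
    by_contra hcon
    push_neg at hcon
    have hu : T = Finset.univ := Finset.eq_univ_iff_forall.mpr hcon
    have : T.card = n := by rw [hu, Finset.card_univ, Fintype.card_fin]
    omega
  set S := insert j T with hS
  have hScard : S.card = k := by
    rw [hS, Finset.card_insert_of_notMem hj, hT]; omega
  have hSpure := h S hScard
  have card_univ_d : ((Finset.univ : Finset (Fin d)).card : ℝ) = d := by
    simp
  have key : purity T ψ ≤ (d : ℝ) * purity S ψ := by
    rw [purity_eq, purity_eq]
    have step1 : ∀ a b : {i : Fin n // i ∈ T} → Fin d,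
        ‖rdm T ψ a b‖ ^ 2
          ≤ (d : ℝ) * ∑ m : Fin d,
              ‖rdm S ψ (extFun j T a m) (extFun j T b m)‖ ^ 2 := by
      intro a b
      rw [rdm_marginal j T hj]
      calc ‖∑ m : Fin d, rdm S ψ (extFun j T a m) (extFun j T b m)‖ ^ 2
          ≤ (∑ m : Fin d, ‖rdm S ψ (extFun j T a m) (extFun j T b m)‖) ^ 2 := by
            exact pow_le_pow_left₀ (norm_nonneg _) (norm_sum_le _ _) 2
        _ ≤ ((Finset.univ : Finset (Fin d)).card : ℝ)
              * ∑ m : Fin d, ‖rdm S ψ (extFun j T a m) (extFun j T b m)‖ ^ 2 :=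
            sq_sum_le_card_mul_sum_sq
        _ = (d : ℝ) * _ := by rw [card_univ_d]
    calc ∑ a, ∑ b, ‖rdm T ψ a b‖ ^ 2
        ≤ ∑ a, ∑ b, (d : ℝ) * ∑ m : Fin d,
            ‖rdm S ψ (extFun j T a m) (extFun j T b m)‖ ^ 2 := by
          exact Finset.sum_le_sum fun a _ => Finset.sum_le_sum fun b _ => step1 a b
      _ = (d : ℝ) * ∑ a, ∑ b, ∑ m : Fin d,
            ‖rdm S ψ (extFun j T a m) (extFun j T b m)‖ ^ 2 := by
          simp_rw [Finset.mul_sum]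
      _ ≤ (d : ℝ) * ∑ a, ∑ b, ∑ m : Fin d, ∑ m' : Fin d,
            ‖rdm S ψ (extFun j T a m) (extFun j T b m')‖ ^ 2 := by
          refine mul_le_mul_of_nonneg_left ?_ (by positivity)
          refine Finset.sum_le_sum fun a _ => Finset.sum_le_sum fun b _ => ?_
          refine Finset.sum_le_sum fun m _ => ?_
          exact Finset.single_le_sum
            (f := fun m' => ‖rdm S ψ (extFun j T a m) (extFun j T b m')‖ ^ 2)
            (fun m' _ => by positivity) (Finset.mem_univ m)
      _ = (d : ℝ) * ∑ a', ∑ b', ‖rdm S ψ a' b'‖ ^ 2 := by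
          congr 1
          have swap : ∑ a, ∑ b, ∑ m : Fin d, ∑ m' : Fin d,
              ‖rdm S ψ (extFun j T a m) (extFun j T b m')‖ ^ 2
            = ∑ p : (({i : Fin n // i ∈ T} → Fin d) × Fin d),
                ∑ q : (({i : Fin n // i ∈ T} → Fin d) × Fin d),
                ‖rdm S ψ (eS j T hj p) (eS j T hj q)‖ ^ 2 := by
            rw [Fintype.sum_prod_type]
            refine Finset.sum_congr rfl fun a _ => ?_
            rw [Finset.sum_comm]
            refine Finset.sum_congr rfl fun m _ => ?_
            rw [Fintype.sum_prod_type]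
            rfl
          rw [swap]
          rw [Equiv.sum_comp (eS j T hj)
            (fun a' => ∑ q : (({i : Fin n // i ∈ T} → Fin d) × Fin d),
              ‖rdm S ψ a' (eS j T hj q)‖ ^ 2)]
          exact Finset.sum_congr rfl fun a' _ =>
            Equiv.sum_comp (eS j T hj) (fun b' => ‖rdm S ψ a' b'‖ ^ 2)
  have hd1 : (1 : ℝ) ≤ d := by exact_mod_cast hd
  have hdpos : (0 : ℝ) < d := by exact_mod_cast hd
  have hpow : (d : ℝ) * (1 / (d : ℝ) ^ k) = 1 / (d : ℝ) ^ (k - 1) := by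
    rw [show k = (k - 1) + 1 by omega, pow_succ]
    field_simp
    congr 1
  calc purity T ψ ≤ (d : ℝ) * purity S ψ := key
    _ ≤ (d : ℝ) * (1 / (d : ℝ) ^ k + ε ^ 2) :=
        mul_le_mul_of_nonneg_left hSpure hdpos.le
    _ = 1 / (d : ℝ) ^ (k - 1) + (d : ℝ) * ε ^ 2 := by rw [mul_add, hpow]
    _ ≤ 1 / (d : ℝ) ^ (k - 1) + ((d : ℝ) * ε) ^ 2 := by
        have : (d : ℝ) * ε ^ 2 ≤ ((d : ℝ) * ε) ^ 2 := by nlinarith [sq_nonneg ε]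
        linarith

end ApproxKUniform
end
end

section
/- Let ρ = (I + P)/D be a density matrix of dimension D, where P is traceless Hermitian with ‖P‖_HS ≤ Dε, and suppose all eigenvalues of P have absolute value less than 1. Then, up to third-order terms, the von Neumann entropy satisfies S(ρ) ≥ log D − Dε²/2; equivalently, the relative entropy to the maximally mixed state satisfies S(ρ ‖ I/D) = log D − S(ρ) ≤ Dε²/2 + O(D²ε³). -/
open scoped BigOperators Matrix ComplexOrder
open Matrix

noncomputable section

namespace ApproxKUniform

/-- Von Neumann entropy `S(ρ) = −Σ λ_i log λ_i` of a Hermitian matrix,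
computed from its eigenvalues (with the convention `0 log 0 = 0`). -/
def vnEntropy {D : ℕ} {ρ : Matrix (Fin D) (Fin D) ℂ} (h : ρ.IsHermitian) : ℝ :=
  -∑ i, h.eigenvalues i * Real.log (h.eigenvalues i)

private lemma hasDerivAt_mulLog (y : ℝ) (hy : 1 + y ≠ 0) :
    HasDerivAt (fun t : ℝ => (1 + t) * Real.log (1 + t)) (Real.log (1 + y) + 1) y := by
  have h1 : HasDerivAt (fun t : ℝ => 1 + t) 1 y := by
    simpa using (hasDerivAt_id y).const_add (1 : ℝ)
  have h2 : HasDerivAt (fun t : ℝ => Real.log (1 + t)) ((1 + y)⁻¹ * 1) y :=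
    (Real.hasDerivAt_log hy).comp y h1
  have h3 := h1.mul h2
  refine h3.congr_deriv ?_
  field_simp

private lemma key_nonneg {x : ℝ} (hx : 0 ≤ x) :
    (1 + x) * Real.log (1 + x) ≤ x + x ^ 2 / 2 := by
  set f : ℝ → ℝ := fun t => t + t ^ 2 / 2 - (1 + t) * Real.log (1 + t) with hf
  have hd : ∀ y : ℝ, 0 < 1 + y → HasDerivAt f (y - Real.log (1 + y)) y := by
    intro y hy
    have h4 : HasDerivAt (fun t : ℝ => t + t ^ 2 / 2) (1 + y) y := by
      have := (hasDerivAt_pow 2 y).div_const 2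
      have h5 := (hasDerivAt_id y).add this
      refine h5.congr_deriv ?_
      norm_num
    have h6 := h4.sub (hasDerivAt_mulLog y hy.ne')
    refine h6.congr_deriv ?_
    ring
  have hmono : MonotoneOn f (Set.Ici 0) := by
    apply monotoneOn_of_deriv_nonneg (convex_Ici 0)
    · intro t ht
      have hy : (0:ℝ) < 1 + t := by simp only [Set.mem_Ici] at ht; linarith
      exact ((hd t hy).continuousAt).continuousWithinAt
    · intro t ht
      rw [interior_Ici] at ht
      have hy : (0:ℝ) < 1 + t := by simp only [Set.mem_Ioi] at ht; linarith
      exact ((hd t hy).differentiableAt).differentiableWithinAt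
    · intro t ht
      rw [interior_Ici] at ht
      have hy : (0:ℝ) < 1 + t := by simp only [Set.mem_Ioi] at ht; linarith
      rw [(hd t hy).deriv]
      have := Real.log_le_sub_one_of_pos hy
      linarith
  have h0 : f 0 ≤ f x := hmono Set.self_mem_Ici hx hx
  simp only [hf] at h0
  norm_num [Real.log_one] at h0
  linarith

private lemma one_sub_inv_le_log {t : ℝ} (ht : 0 < t) : 1 - t⁻¹ ≤ Real.log t := by
  have := Real.log_le_sub_one_of_pos (inv_pos.mpr ht)
  rw [Real.log_inv] at this
  linarith

private lemma key_neg_half {x : ℝ} (h1 : -(1/2) ≤ x) (h2 : x ≤ 0) :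
    (1 + x) * Real.log (1 + x) ≤ x + x ^ 2 / 2 - x ^ 3 := by
  set g : ℝ → ℝ := fun t => t + t ^ 2 / 2 - t ^ 3 - (1 + t) * Real.log (1 + t) with hg
  have hd : ∀ y : ℝ, 0 < 1 + y → HasDerivAt g (y - 3 * y ^ 2 - Real.log (1 + y)) y := by
    intro y hy
    have h4 : HasDerivAt (fun t : ℝ => t + t ^ 2 / 2 - t ^ 3) (1 + y - 3 * y ^ 2) y := by
      have hp2 := (hasDerivAt_pow 2 y).div_const 2
      have hp3 := hasDerivAt_pow 3 y
      have h5 := ((hasDerivAt_id y).add hp2).sub hp3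
      refine h5.congr_deriv ?_
      norm_num
    have h6 := h4.sub (hasDerivAt_mulLog y hy.ne')
    refine h6.congr_deriv ?_
    ring
  have hanti : AntitoneOn g (Set.Icc (-(1/2)) 0) := by
    apply antitoneOn_of_deriv_nonpos (convex_Icc _ _)
    · intro t ht
      have hy : (0:ℝ) < 1 + t := by
        simp only [Set.mem_Icc] at ht; linarith
      exact ((hd t hy).continuousAt).continuousWithinAt
    · intro t ht
      rw [interior_Icc] at ht
      have hy : (0:ℝ) < 1 + t := by simp only [Set.mem_Ioo] at ht; linarith
      exact ((hd t hy).differentiableAt).differentiableWithinAt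
    · intro t ht
      rw [interior_Icc] at ht
      simp only [Set.mem_Ioo] at ht
      have hy : (0:ℝ) < 1 + t := by linarith
      rw [(hd t hy).deriv]
      have hA : 1 - (1 + t)⁻¹ ≤ Real.log (1 + t) := one_sub_inv_le_log hy
      have hkey : 1 - (1 + t)⁻¹ - (t - 3 * t ^ 2) = t ^ 2 * (2 + 3 * t) / (1 + t) := by
        field_simp
        ring
      have hnn : 0 ≤ t ^ 2 * (2 + 3 * t) / (1 + t) := by
        apply div_nonneg _ hy.le
        apply mul_nonneg (sq_nonneg t)
        linarith [ht.1]
      linarith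
  have h0 : g 0 ≤ g x := hanti (by constructor <;> linarith) (by constructor <;> norm_num) h2
  simp only [hg] at h0
  norm_num [Real.log_one] at h0
  linarith

private lemma keyIneq {x : ℝ} (hx : -1 ≤ x) :
    (1 + x) * Real.log (1 + x) ≤ x + x ^ 2 / 2 + |x| ^ 3 := by
  rcases le_or_gt 0 x with h | h
  · have h1 : (0:ℝ) ≤ |x| ^ 3 := by positivity
    linarith [key_nonneg h]
  · rw [abs_of_neg h]
    rcases le_or_gt (-(1/2)) x with h1 | h1
    · have hcube : (-x) ^ 3 = -x ^ 3 := by ring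
      rw [hcube]
      linarith [key_neg_half h1 h.le]
    · rcases eq_or_lt_of_le hx with he | hlt
      · rw [← he]
        norm_num [Real.log_zero]
      · have hpos : (0:ℝ) < 1 + x := by linarith
        have hl : Real.log (1 + x) ≤ x := by
          have := Real.log_le_sub_one_of_pos hpos
          linarith
        have hmul : (1 + x) * Real.log (1 + x) ≤ (1 + x) * x :=
          mul_le_mul_of_nonneg_left hl hpos.le
        have : (1 + x) * x ≤ x + x ^ 2 / 2 + (-x) ^ 3 := by
          nlinarith [sq_nonneg x]
        linarith

private lemma trace_conj {n : ℕ} (U : Matrix (Fin n) (Fin n) ℂ) (hU : star U * U = 1)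
    (d : Fin n → ℂ) : (U * Matrix.diagonal d * star U).trace = ∑ i, d i := by
  rw [Matrix.trace_mul_cycle, hU, Matrix.one_mul, Matrix.trace_diagonal]

private lemma trace_eigen {n : ℕ} {ρ : Matrix (Fin n) (Fin n) ℂ} (h : ρ.IsHermitian) :
    ρ.trace = ∑ i, (h.eigenvalues i : ℂ) ∧
      (ρ * ρ).trace = ∑ i, (h.eigenvalues i : ℂ) ^ 2 := by
  classical
  set U : Matrix (Fin n) (Fin n) ℂ := ↑(h.eigenvectorUnitary) with hUdef
  have hU : star U * U = 1 := (Matrix.mem_unitaryGroup_iff').mp h.eigenvectorUnitary.2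
  have hsp : ρ = U * Matrix.diagonal (fun i => (h.eigenvalues i : ℂ)) * star U := by
    convert h.spectral_theorem using 2
    rw [Unitary.conjStarAlgAut_apply]
    rfl
  constructor
  · exact (congrArg Matrix.trace hsp).trans (trace_conj U hU _)
  · have hsq : ρ * ρ = U * Matrix.diagonal (fun i => (h.eigenvalues i : ℂ) ^ 2) * star U := by
      conv_lhs => rw [hsp]
      have : (U * Matrix.diagonal (fun i => (h.eigenvalues i : ℂ)) * star U) *
          (U * Matrix.diagonal (fun i => (h.eigenvalues i : ℂ)) * star U)
          = U * (Matrix.diagonal (fun i => (h.eigenvalues i : ℂ)) * ((star U * U) *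
            (Matrix.diagonal (fun i => (h.eigenvalues i : ℂ)) * star U))) := by
        simp only [Matrix.mul_assoc]
      rw [this, hU, Matrix.one_mul, ← Matrix.mul_assoc, ← Matrix.mul_assoc,
        Matrix.mul_assoc U, Matrix.diagonal_mul_diagonal]
      congr 2
      ext i
      ring
    exact (congrArg Matrix.trace hsq).trans (trace_conj U hU _)

/-- If `ρ = (I + P)/D` is a density matrix with `P` traceless Hermitian,
`‖P‖_HS ≤ Dε`, and all eigenvalues of `P` of absolute value `< 1`, then the relative
entropy to the maximally mixed state obeys
`S(ρ‖I/D) = log D − S(ρ) ≤ Dε²/2 + O(D²ε³)`, i.e. there is a universal constant `C`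
controlling the third-order remainder. -/
theorem relEntropy_le_of_small_fluctuation :
    ∃ C : ℝ, 0 ≤ C ∧
      ∀ (D : ℕ), 0 < D →
        ∀ (ρ P : Matrix (Fin D) (Fin D) ℂ) (hherm : ρ.IsHermitian)
          (hPherm : P.IsHermitian) (ε : ℝ), 0 ≤ ε →
          ρ.PosSemidef → ρ.trace = 1 →
          P = (D : ℂ) • ρ - 1 → P.trace = 0 →
          hsNorm P ≤ (D : ℝ) * ε →
          (∀ i, |hPherm.eigenvalues i| < 1) →
          Real.log D - vnEntropy hherm ≤ (D : ℝ) * ε ^ 2 / 2 + C * (D : ℝ) ^ 2 * ε ^ 3 := by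
  refine ⟨1, zero_le_one, ?_⟩
  intro D hD ρ P hherm hPherm ε hε hpsd htr hP _htrP hHS _heig
  have hD0 : (0:ℝ) < D := by exact_mod_cast hD
  set lam : Fin D → ℝ := hherm.eigenvalues with hlam
  have hnn : ∀ i, 0 ≤ lam i := fun i => hpsd.eigenvalues_nonneg i
  obtain ⟨htr1, htr2⟩ := trace_eigen hherm
  have hsum : ∑ i, lam i = 1 := by
    have h : ((∑ i, lam i : ℝ) : ℂ) = 1 := by
      push_cast
      rw [← htr1, htr]
    exact_mod_cast h
  set μ : Fin D → ℝ := fun i => (D : ℝ) * lam i - 1 with hμ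
  have hmusum : ∑ i, μ i = 0 := by
    simp only [hμ, Finset.sum_sub_distrib, ← Finset.mul_sum, hsum]
    simp
  set S2 := ∑ i, μ i ^ 2 with hS2def
  have hS2nn : 0 ≤ S2 := Finset.sum_nonneg fun i _ => sq_nonneg _
  -- trace of P² in terms of eigenvalues
  have h1 : (P * P).trace = (D : ℂ) ^ 2 * (ρ * ρ).trace - (D : ℂ) := by
    rw [hP]
    simp only [Matrix.sub_mul, Matrix.mul_sub, Matrix.smul_mul, Matrix.mul_smul,
      Matrix.one_mul, Matrix.mul_one, Matrix.trace_sub, Matrix.trace_smul, Matrix.trace_one,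
      smul_smul, smul_eq_mul, htr, mul_one, Fintype.card_fin]
    push_cast
    ring
  have hS2eq : S2 = (D:ℝ)^2 * (∑ i, lam i ^ 2) - D := by
    have hterm : ∀ i ∈ Finset.univ, μ i ^ 2 = (D:ℝ)^2 * lam i ^ 2 - 2*(D:ℝ)*lam i + 1 :=
      fun i _ => by simp only [hμ]; ring
    rw [hS2def, Finset.sum_congr rfl hterm]
    rw [Finset.sum_add_distrib, Finset.sum_sub_distrib, ← Finset.mul_sum, ← Finset.mul_sum,
      hsum]
    simp [Finset.card_fin]
    ring
  have hre : ((Pᴴ * P).trace).re = S2 := by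
    rw [hPherm.eq, h1, htr2]
    have h2 : ((D:ℂ) ^ 2 * (∑ i, ((lam i : ℂ))^2) - (D:ℂ))
        = (((D:ℝ)^2 * (∑ i, lam i ^ 2) - D : ℝ) : ℂ) := by
      push_cast
      ring
    rw [h2, Complex.ofReal_re, ← hS2eq]
  have hS2le : S2 ≤ ((D:ℝ) * ε)^2 := by
    have h : Real.sqrt S2 ≤ (D:ℝ) * ε := by
      have := hHS
      unfold hsNorm at this
      rwa [hre] at this
    calc S2 = (Real.sqrt S2)^2 := (Real.sq_sqrt hS2nn).symm
      _ ≤ ((D:ℝ) * ε)^2 := pow_le_pow_left₀ (Real.sqrt_nonneg _) h 2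
  have habs : ∀ i, |μ i| ≤ (D:ℝ) * ε := by
    intro i
    have h1 : μ i ^ 2 ≤ S2 :=
      Finset.single_le_sum (f := fun i => μ i ^ 2) (fun j _ => sq_nonneg _) (Finset.mem_univ i)
    have h2 : μ i ^ 2 ≤ ((D:ℝ)*ε)^2 := h1.trans hS2le
    calc |μ i| = Real.sqrt (μ i ^ 2) := (Real.sqrt_sq_eq_abs _).symm
      _ ≤ Real.sqrt (((D:ℝ)*ε)^2) := Real.sqrt_le_sqrt h2
      _ = (D:ℝ)*ε := Real.sqrt_sq (by positivity)
  have hS3 : ∑ i, |μ i| ^ 3 ≤ (D:ℝ) * ε * S2 := by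
    calc ∑ i, |μ i| ^ 3 = ∑ i, |μ i| * μ i ^ 2 := by
          refine Finset.sum_congr rfl fun i _ => ?_
          rw [← sq_abs]
          ring
      _ ≤ ∑ i, ((D:ℝ)*ε) * μ i ^ 2 :=
          Finset.sum_le_sum fun i _ => mul_le_mul_of_nonneg_right (habs i) (sq_nonneg _)
      _ = (D:ℝ) * ε * S2 := by rw [← Finset.mul_sum]
  -- rewrite the entropy gap
  have hterm : ∀ i ∈ Finset.univ, (1 + μ i) * Real.log (1 + μ i)
      = (D:ℝ) * (lam i * Real.log D + lam i * Real.log (lam i)) := by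
    intro i _
    have h1 : 1 + μ i = (D:ℝ) * lam i := by simp only [hμ]; ring
    rcases eq_or_ne (lam i) 0 with h0 | h0
    · rw [h1, h0]
      simp
    · rw [h1, Real.log_mul (ne_of_gt hD0) h0]
      ring
  have hgap : Real.log D - vnEntropy hherm
      = (1 / (D:ℝ)) * ∑ i, (1 + μ i) * Real.log (1 + μ i) := by
    rw [Finset.sum_congr rfl hterm, ← Finset.mul_sum]
    have hsplit : ∑ i, (lam i * Real.log D + lam i * Real.log (lam i))
        = Real.log D - vnEntropy hherm := by
      rw [Finset.sum_add_distrib]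
      unfold vnEntropy
      rw [← Finset.sum_mul, hsum]
      ring
    rw [hsplit]
    field_simp
  have hbound : ∑ i, (1 + μ i) * Real.log (1 + μ i) ≤ S2 / 2 + (D:ℝ) * ε * S2 := by
    have hle : ∀ i ∈ Finset.univ, (1 + μ i) * Real.log (1 + μ i)
        ≤ μ i + μ i ^ 2 / 2 + |μ i| ^ 3 := by
      intro i _
      apply keyIneq
      have := mul_nonneg (le_of_lt hD0) (hnn i)
      simp only [hμ]
      linarith
    calc ∑ i, (1 + μ i) * Real.log (1 + μ i)
        ≤ ∑ i, (μ i + μ i ^ 2 / 2 + |μ i| ^ 3) := Finset.sum_le_sum hle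
      _ = (∑ i, μ i) + (∑ i, μ i ^ 2) / 2 + ∑ i, |μ i| ^ 3 := by
          rw [Finset.sum_add_distrib, Finset.sum_add_distrib, Finset.sum_div]
      _ ≤ 0 + S2 / 2 + (D:ℝ) * ε * S2 := by
          rw [hmusum, ← hS2def]
          linarith [hS3]
      _ = S2 / 2 + (D:ℝ) * ε * S2 := by ring
  rw [hgap]
  have hDe : (0:ℝ) ≤ (D:ℝ) * ε := by positivity
  calc (1 / (D:ℝ)) * ∑ i, (1 + μ i) * Real.log (1 + μ i)
      ≤ (1 / (D:ℝ)) * (S2 / 2 + (D:ℝ) * ε * S2) :=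
        mul_le_mul_of_nonneg_left hbound (by positivity)
    _ ≤ (1 / (D:ℝ)) * (((D:ℝ)*ε)^2 / 2 + (D:ℝ) * ε * ((D:ℝ)*ε)^2) := by
        apply mul_le_mul_of_nonneg_left _ (by positivity)
        have h2 : (D:ℝ) * ε * S2 ≤ (D:ℝ) * ε * ((D:ℝ)*ε)^2 :=
          mul_le_mul_of_nonneg_left hS2le hDe
        linarith
    _ = (D:ℝ) * ε ^ 2 / 2 + 1 * (D:ℝ)^2 * ε ^ 3 := by
        field_simp

end ApproxKUniform
end
end

section
/- Suppose an exact AME(n,d) state would violate the shadow inequality with s_T(ρ) < 0 for some T ⊆ [n] with |T| = t. Then no ε-approximate AME(n,d) state exists for ε < √(−s_T(ρ)/f(d,n,t)), where f(d,n,t) = Σ_{l=0}^{⌊t/2⌋} Σ_{k'=0}^{n−t} C(t,2l)·C(n−t,k')·d^{2·max(⌊n/2⌋−(2l+k'), (2l+k')−⌈n/2⌉)}. -/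
open scoped BigOperators Matrix symmDiff
open Matrix

noncomputable section

namespace ApproxKUniform

variable {n d : ℕ}

/-- The shadow enumerator that an exact AME(n,d) state would have,
namely `Σ_{S⊆[n]} (−1)^{|S∩T|} d^{−min(|S|,n−|S|)}`. -/
def sExactAME (d n : ℕ) (T : Finset (Fin n)) : ℝ :=
  ∑ S : Finset (Fin n), (-1 : ℝ) ^ (S ∩ T).card / (d : ℝ) ^ min S.card (n - S.card)

/-- The combinatorial factor
`f(d,n,t) = Σ_{l=0}^{⌊t/2⌋} Σ_{k'=0}^{n−t} C(t,2l)·C(n−t,k')·d^{2·max(⌊n/2⌋−(2l+k'),(2l+k')−⌈n/2⌉)}`. -/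
def fDNT (d n t : ℕ) : ℝ :=
  ∑ l ∈ Finset.range (t / 2 + 1), ∑ k' ∈ Finset.range (n - t + 1),
    (t.choose (2 * l) : ℝ) * ((n - t).choose k' : ℝ) *
      (d : ℝ) ^ (2 * max (n / 2 - (2 * l + k')) ((2 * l + k') - (n + 1) / 2))

/-- swap map: take `y` on `S`, `x` off `S`. -/
def mS (S : Finset (Fin n)) (x y : Fin n → Fin d) : Fin n → Fin d :=
  fun i => if i ∈ S then y i else x i

/-- glue equiv -/
def glueEquiv (S : Finset (Fin n)) :
    (({i : Fin n // i ∈ S} → Fin d) × ({i : Fin n // i ∉ S} → Fin d)) ≃ (Fin n → Fin d) where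
  toFun p := glue S p.1 p.2
  invFun x := (fun i => x i.1, fun i => x i.1)
  left_inv p := by
    ext i
    · simp [glue, i.2]
    · simp [glue, i.2]
  right_inv x := by
    funext i
    by_cases h : i ∈ S <;> simp [glue, h]

lemma rdm_apply (S : Finset (Fin n)) (ψ : (Fin n → Fin d) → ℂ) (a b) :
    rdm S ψ a b = ∑ c : {i : Fin n // i ∉ S} → Fin d,
      ψ (glue S a c) * (starRingEnd ℂ) (ψ (glue S b c)) := rfl

lemma mS_glue_left (S : Finset (Fin n)) (a b : {i : Fin n // i ∈ S} → Fin d)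
    (c c' : {i : Fin n // i ∉ S} → Fin d) :
    mS S (glue S a c) (glue S b c') = glue S b c := by
  funext i
  by_cases h : i ∈ S <;> simp [mS, glue, h]

/-- pm: purity as a sum over pairs of full assignments. -/
def pm (S : Finset (Fin n)) (ψ : (Fin n → Fin d) → ℂ) : ℂ :=
  ∑ x : Fin n → Fin d, ∑ y : Fin n → Fin d,
    ψ x * (starRingEnd ℂ) (ψ (mS S x y)) * (ψ y * (starRingEnd ℂ) (ψ (mS S y x)))

lemma trace_eq_pm (S : Finset (Fin n)) (ψ : (Fin n → Fin d) → ℂ) :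
    (rdm S ψ * rdm S ψ).trace = pm S ψ := by
  classical
  have h1 : (rdm S ψ * rdm S ψ).trace
      = ∑ a, ∑ b, rdm S ψ a b * rdm S ψ b a := by
    simp [Matrix.trace, Matrix.mul_apply, Matrix.diag]
  rw [h1]
  have h2 : ∀ a b, rdm S ψ a b * rdm S ψ b a
      = ∑ c : {i : Fin n // i ∉ S} → Fin d, ∑ c' : {i : Fin n // i ∉ S} → Fin d,
        (ψ (glue S a c) * (starRingEnd ℂ) (ψ (glue S b c))) *
        (ψ (glue S b c') * (starRingEnd ℂ) (ψ (glue S a c'))) := by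
    intro a b
    rw [rdm_apply, rdm_apply, Finset.sum_mul_sum]
  simp_rw [h2]
  have h3 : (∑ a, ∑ b, ∑ c : {i : Fin n // i ∉ S} → Fin d, ∑ c' : {i : Fin n // i ∉ S} → Fin d,
        (ψ (glue S a c) * (starRingEnd ℂ) (ψ (glue S b c))) *
        (ψ (glue S b c') * (starRingEnd ℂ) (ψ (glue S a c'))))
      = ∑ a, ∑ c : {i : Fin n // i ∉ S} → Fin d, ∑ b, ∑ c' : {i : Fin n // i ∉ S} → Fin d,
        (ψ (glue S a c) * (starRingEnd ℂ) (ψ (glue S b c))) *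
        (ψ (glue S b c') * (starRingEnd ℂ) (ψ (glue S a c'))) := by
    refine Finset.sum_congr rfl fun a _ => ?_
    exact Finset.sum_comm
  rw [h3]
  have h4 : (∑ a, ∑ c : {i : Fin n // i ∉ S} → Fin d, ∑ b, ∑ c' : {i : Fin n // i ∉ S} → Fin d,
        (ψ (glue S a c) * (starRingEnd ℂ) (ψ (glue S b c))) *
        (ψ (glue S b c') * (starRingEnd ℂ) (ψ (glue S a c'))))
      = ∑ p : ({i : Fin n // i ∈ S} → Fin d) × ({i : Fin n // i ∉ S} → Fin d),
        ∑ q : ({i : Fin n // i ∈ S} → Fin d) × ({i : Fin n // i ∉ S} → Fin d),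
        (ψ (glue S p.1 p.2) * (starRingEnd ℂ) (ψ (glue S q.1 p.2))) *
        (ψ (glue S q.1 q.2) * (starRingEnd ℂ) (ψ (glue S p.1 q.2))) := by
    simp [Fintype.sum_prod_type]
  rw [h4, pm, ← Equiv.sum_comp (glueEquiv S) (fun x => ∑ y, ψ x * (starRingEnd ℂ) (ψ (mS S x y)) * (ψ y * (starRingEnd ℂ) (ψ (mS S y x))))]
  refine Finset.sum_congr rfl fun p _ => ?_
  rw [← Equiv.sum_comp (glueEquiv S)]
  refine Finset.sum_congr rfl fun q _ => ?_
  have e1 : mS S (glueEquiv S p) (glueEquiv S q) = glue S q.1 p.2 :=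
    mS_glue_left S p.1 q.1 p.2 q.2
  have e2 : mS S (glueEquiv S q) (glueEquiv S p) = glue S p.1 q.2 :=
    mS_glue_left S q.1 p.1 q.2 p.2
  simp only [glueEquiv, Equiv.coe_fn_mk] at e1 e2 ⊢
  rw [e1, e2]

lemma mS_mS (S S' : Finset (Fin n)) (x y : Fin n → Fin d) :
    mS S' (mS S x y) (mS S y x) = mS (S ∆ S') x y := by
  funext i
  by_cases h : i ∈ S <;> by_cases h' : i ∈ S' <;>
    simp [mS, h, h', Finset.mem_symmDiff]

lemma mS_left_invol (S : Finset (Fin n)) (x y : Fin n → Fin d) :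
    mS S (mS S x y) (mS S y x) = x := by
  rw [mS_mS, symmDiff_self]
  funext i; simp [mS]

def pairSwap (S : Finset (Fin n)) :
    ((Fin n → Fin d) × (Fin n → Fin d)) ≃ ((Fin n → Fin d) × (Fin n → Fin d)) :=
  Function.Involutive.toPerm (fun p => (mS S p.1 p.2, mS S p.2 p.1))
    (fun p => by simp [mS_left_invol])

lemma pairSwap_apply (S : Finset (Fin n)) (p : (Fin n → Fin d) × (Fin n → Fin d)) :
    pairSwap S p = (mS S p.1 p.2, mS S p.2 p.1) := rfl

lemma sign_mul (T S S' : Finset (Fin n)) :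
    ((-1 : ℂ)) ^ ((S ∩ T).card) * ((-1 : ℂ)) ^ ((S' ∩ T).card)
      = ((-1 : ℂ)) ^ (((S ∆ S') ∩ T).card) := by
  classical
  have hd : (S ∆ S') ∩ T = (S ∩ T) ∆ (S' ∩ T) := inf_symmDiff_distrib_right S S' T
  have hpar : (S ∩ T).card + (S' ∩ T).card
      = ((S ∩ T) ∆ (S' ∩ T)).card + 2 * ((S ∩ T) ∩ (S' ∩ T)).card := by
    have h1 : ((S ∩ T) ∆ (S' ∩ T)).card = ((S ∩ T) \ (S' ∩ T)).card + ((S' ∩ T) \ (S ∩ T)).card := by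
      rw [symmDiff_def, Finset.sup_eq_union]
      exact Finset.card_union_of_disjoint disjoint_sdiff_sdiff
    have h2 := Finset.card_sdiff_add_card_inter (S ∩ T) (S' ∩ T)
    have h3 := Finset.card_sdiff_add_card_inter (S' ∩ T) (S ∩ T)
    have h4 : ((S' ∩ T) ∩ (S ∩ T)).card = ((S ∩ T) ∩ (S' ∩ T)).card := by
      rw [Finset.inter_comm]
    omega
  rw [hd, ← pow_add, hpar, pow_add, pow_mul]
  norm_num

/-- pm as a sum over pairs. -/
lemma pm_pair (S : Finset (Fin n)) (ψ : (Fin n → Fin d) → ℂ) :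
    pm S ψ = ∑ p : (Fin n → Fin d) × (Fin n → Fin d),
      ψ p.1 * (starRingEnd ℂ) (ψ (mS S p.1 p.2)) *
      (ψ p.2 * (starRingEnd ℂ) (ψ (mS S p.2 p.1))) := by
  rw [pm, Fintype.sum_prod_type]

lemma shadow_nonneg (T : Finset (Fin n)) (ψ : (Fin n → Fin d) → ℂ) :
    0 ≤ (∑ S : Finset (Fin n), (-1 : ℂ) ^ ((S ∩ T).card) * pm S ψ).re := by
  classical
  set A : Finset (Fin n) → ((Fin n → Fin d) × (Fin n → Fin d)) → ℂ :=
    fun S p => (-1 : ℂ) ^ ((S ∩ T).card) * (ψ (mS S p.1 p.2) * ψ (mS S p.2 p.1)) with hA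
  set χ : ((Fin n → Fin d) × (Fin n → Fin d)) → ℂ := fun p => ∑ S, A S p with hχ
  have key : ∑ p : (Fin n → Fin d) × (Fin n → Fin d), χ p * (starRingEnd ℂ) (χ p)
      = (Fintype.card (Finset (Fin n)) : ℂ) *
        ∑ S : Finset (Fin n), (-1 : ℂ) ^ ((S ∩ T).card) * pm S ψ := by
    have expand : ∀ p, χ p * (starRingEnd ℂ) (χ p)
        = ∑ S, ∑ S', A S p * (starRingEnd ℂ) (A S' p) := by
      intro p
      rw [hχ, map_sum, Finset.sum_mul_sum]
    simp_rw [expand]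
    rw [Finset.sum_comm]
    have swap2 : ∀ S : Finset (Fin n),
        (∑ p : (Fin n → Fin d) × (Fin n → Fin d), ∑ S', A S p * (starRingEnd ℂ) (A S' p))
        = ∑ S', ∑ p : (Fin n → Fin d) × (Fin n → Fin d), A S p * (starRingEnd ℂ) (A S' p) :=
      fun S => Finset.sum_comm
    simp_rw [swap2]
    have inner : ∀ S S' : Finset (Fin n),
        (∑ p : (Fin n → Fin d) × (Fin n → Fin d), A S p * (starRingEnd ℂ) (A S' p))
        = (-1 : ℂ) ^ (((S ∆ S') ∩ T).card) * pm (S ∆ S') ψ := by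
      intro S S'
      rw [← Equiv.sum_comp (pairSwap S) (fun p => A S p * (starRingEnd ℂ) (A S' p))]
      rw [pm_pair, Finset.mul_sum]
      refine Finset.sum_congr rfl fun p _ => ?_
      have h1 : A S (pairSwap S p) = (-1 : ℂ) ^ ((S ∩ T).card) * (ψ p.1 * ψ p.2) := by
        simp only [hA, pairSwap_apply]
        rw [mS_left_invol, mS_left_invol]
      have h2 : A S' (pairSwap S p) = (-1 : ℂ) ^ ((S' ∩ T).card) *
          (ψ (mS (S ∆ S') p.1 p.2) * ψ (mS (S ∆ S') p.2 p.1)) := by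
        simp only [hA, pairSwap_apply]
        rw [mS_mS, mS_mS]
      rw [h1, h2]
      rw [_root_.map_mul, _root_.map_mul, map_pow, map_neg, _root_.map_one]
      rw [← sign_mul T S S']
      ring
    simp_rw [inner]
    have reidx : ∀ S : Finset (Fin n),
        (∑ S' : Finset (Fin n), (-1 : ℂ) ^ (((S ∆ S') ∩ T).card) * pm (S ∆ S') ψ)
        = ∑ W : Finset (Fin n), (-1 : ℂ) ^ ((W ∩ T).card) * pm W ψ := by
      intro S
      exact Equiv.sum_comp (Function.Involutive.toPerm (fun S' => S ∆ S')
        (fun S' => symmDiff_symmDiff_cancel_left S S'))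
        (fun W => (-1 : ℂ) ^ ((W ∩ T).card) * pm W ψ)
    simp_rw [reidx, Finset.sum_const, Finset.card_univ, nsmul_eq_mul]
  have lhs_re : 0 ≤ (∑ p : (Fin n → Fin d) × (Fin n → Fin d), χ p * (starRingEnd ℂ) (χ p)).re := by
    rw [Complex.re_sum]
    apply Finset.sum_nonneg
    intro p _
    rw [Complex.mul_conj]
    simp [Complex.normSq_nonneg]
  rw [key] at lhs_re
  have hgen : ∀ (N : ℕ) (z : ℂ), ((N : ℂ) * z).re = (N : ℝ) * z.re := by
    intro N z; simp [Complex.mul_re]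
  rw [hgen] at lhs_re
  have hcard : (0:ℝ) < (Fintype.card (Finset (Fin n)) : ℝ) := by positivity
  nlinarith
lemma rdm_conj (S : Finset (Fin n)) (ψ : (Fin n → Fin d) → ℂ) (a b) :
    rdm S ψ b a = (starRingEnd ℂ) (rdm S ψ a b) := by
  rw [rdm_apply, rdm_apply, map_sum]
  refine Finset.sum_congr rfl fun c _ => ?_
  rw [_root_.map_mul (starRingEnd ℂ), Complex.conj_conj]
  ring

lemma purity_eq_sum_sq (S : Finset (Fin n)) (ψ : (Fin n → Fin d) → ℂ) :
    purity S ψ = ∑ a, ∑ b, Complex.normSq (rdm S ψ a b) := by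
  have h1 : (rdm S ψ * rdm S ψ).trace = ∑ a, ∑ b, rdm S ψ a b * rdm S ψ b a := by
    simp [Matrix.trace, Matrix.mul_apply, Matrix.diag]
  rw [purity, h1]
  rw [Complex.re_sum]
  refine Finset.sum_congr rfl fun a _ => ?_
  rw [Complex.re_sum]
  refine Finset.sum_congr rfl fun b _ => ?_
  rw [rdm_conj S ψ a b, Complex.mul_conj]
  simp

lemma purity_nonneg (S : Finset (Fin n)) (ψ : (Fin n → Fin d) → ℂ) :
    0 ≤ purity S ψ := by
  rw [purity_eq_sum_sq]
  refine Finset.sum_nonneg fun a _ => Finset.sum_nonneg fun b _ => Complex.normSq_nonneg _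

lemma rdm_diag (S : Finset (Fin n)) (ψ : (Fin n → Fin d) → ℂ) (a) :
    rdm S ψ a a = ((∑ c : {i : Fin n // i ∉ S} → Fin d, Complex.normSq (ψ (glue S a c)) : ℝ) : ℂ) := by
  rw [rdm_apply]
  push_cast
  refine Finset.sum_congr rfl fun c _ => ?_
  rw [Complex.mul_conj]

lemma sum_rdm_diag (S : Finset (Fin n)) (ψ : (Fin n → Fin d) → ℂ) :
    ∑ a, (rdm S ψ a a).re = ∑ x, ‖ψ x‖ ^ 2 := by
  have : ∀ a, (rdm S ψ a a).re
      = ∑ c : {i : Fin n // i ∉ S} → Fin d, ‖ψ (glue S a c)‖ ^ 2 := by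
    intro a
    rw [rdm_diag]
    rw [Complex.ofReal_re]
    exact Finset.sum_congr rfl fun c _ => by rw [← Complex.sq_norm]
  simp_rw [this]
  rw [← Equiv.sum_comp (glueEquiv S) (fun x => ‖ψ x‖ ^ 2), Fintype.sum_prod_type]
  rfl

lemma card_subtype_fun (S : Finset (Fin n)) :
    Fintype.card ({i : Fin n // i ∈ S} → Fin d) = d ^ S.card := by
  rw [Fintype.card_fun, Fintype.card_fin, Fintype.card_coe]

lemma purity_lower (hd : 0 < d) (S : Finset (Fin n)) (ψ : (Fin n → Fin d) → ℂ)
    (hψ : ∑ x, ‖ψ x‖ ^ 2 = 1) : 1 / (d : ℝ) ^ S.card ≤ purity S ψ := by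
  have hcard := card_subtype_fun (d := d) S
  have h1 : (1 : ℝ) = (∑ a, (rdm S ψ a a).re) ^ 2 := by rw [sum_rdm_diag, hψ]; norm_num
  have h2 : (∑ a, (rdm S ψ a a).re) ^ 2
      ≤ (Fintype.card ({i : Fin n // i ∈ S} → Fin d) : ℝ) * ∑ a, (rdm S ψ a a).re ^ 2 := by
    have := sq_sum_le_card_mul_sum_sq (s := (Finset.univ : Finset ({i : Fin n // i ∈ S} → Fin d)))
      (f := fun a => (rdm S ψ a a).re)
    simpa [Finset.card_univ] using this
  have h3 : ∑ a, (rdm S ψ a a).re ^ 2 ≤ purity S ψ := by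
    rw [purity_eq_sum_sq]
    refine Finset.sum_le_sum fun a _ => ?_
    have hle : Complex.normSq (rdm S ψ a a) ≤ ∑ b, Complex.normSq (rdm S ψ a b) := by
      refine Finset.single_le_sum (fun b _ => Complex.normSq_nonneg _) (Finset.mem_univ a)
    refine le_trans (le_of_eq ?_) hle
    rw [rdm_diag]
    rw [Complex.ofReal_re, Complex.normSq_ofReal, sq]
  have hX : (0:ℝ) < (d:ℝ) ^ S.card := by positivity
  rw [div_le_iff₀ hX]
  have hfin : (1:ℝ) ≤ ((d:ℝ) ^ S.card) * purity S ψ := by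
    calc (1:ℝ) = (∑ a, (rdm S ψ a a).re) ^ 2 := h1
    _ ≤ (Fintype.card ({i : Fin n // i ∈ S} → Fin d) : ℝ) * ∑ a, (rdm S ψ a a).re ^ 2 := h2
    _ ≤ ((d:ℝ) ^ S.card) * purity S ψ := by
        rw [hcard]
        push_cast
        exact mul_le_mul_of_nonneg_left h3 (by positivity)
  linarith

section erase
variable (i : Fin n) (S : Finset (Fin n))

def insIn (hi : i ∈ S) (j : Fin d) (a : {x : Fin n // x ∈ S.erase i} → Fin d) :
    {x : Fin n // x ∈ S} → Fin d :=
  fun x => if hx : x.1 = i then j else a ⟨x.1, Finset.mem_erase.2 ⟨hx, x.2⟩⟩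

def insOut (j : Fin d) (c : {x : Fin n // x ∉ S} → Fin d) :
    {x : Fin n // x ∉ S.erase i} → Fin d :=
  fun x => if hx : x.1 = i then j
    else c ⟨x.1, fun hxS => x.2 (Finset.mem_erase.2 ⟨hx, hxS⟩)⟩

def eIn (hi : i ∈ S) :
    (Fin d × ({x : Fin n // x ∈ S.erase i} → Fin d)) ≃ ({x : Fin n // x ∈ S} → Fin d) where
  toFun p := insIn i S hi p.1 p.2
  invFun A := (A ⟨i, hi⟩, fun x => A ⟨x.1, (Finset.mem_erase.1 x.2).2⟩)
  left_inv p := by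
    ext x
    · simp [insIn]
    · have hx : x.1 ≠ i := (Finset.mem_erase.1 x.2).1
      simp [insIn, hx]
  right_inv A := by
    funext x
    by_cases hx : x.1 = i
    · simp only [insIn, hx, dif_pos]
      exact congrArg A (Subtype.ext hx.symm)
    · simp [insIn, hx]

def eOut (hi : i ∈ S) :
    (Fin d × ({x : Fin n // x ∉ S} → Fin d)) ≃ ({x : Fin n // x ∉ S.erase i} → Fin d) where
  toFun p := insOut i S p.1 p.2
  invFun c' := (c' ⟨i, by simp⟩, fun x => c' ⟨x.1, fun hR => x.2 (Finset.mem_of_mem_erase hR)⟩)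
  left_inv p := by
    ext x
    · simp [insOut]
    · have hx : x.1 ≠ i := fun h => x.2 (h ▸ hi)
      simp [insOut, hx]
  right_inv c' := by
    funext x
    by_cases hx : x.1 = i
    · simp only [insOut, hx, dif_pos]
      exact congrArg c' (Subtype.ext hx.symm)
    · simp [insOut, hx]

lemma glue_insOut (hi : i ∈ S) (j : Fin d) (a : {x : Fin n // x ∈ S.erase i} → Fin d)
    (c : {x : Fin n // x ∉ S} → Fin d) :
    glue (S.erase i) a (insOut i S j c) = glue S (insIn i S hi j a) c := by
  funext x
  by_cases hx : x = i
  · subst hx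
    have h1 : x ∉ S.erase x := by simp
    simp [glue, h1, hi, insOut, insIn]
  · by_cases hxS : x ∈ S
    · have h2 : x ∈ S.erase i := Finset.mem_erase.2 ⟨hx, hxS⟩
      simp [glue, h2, hxS, insIn, hx]
    · have h2 : x ∉ S.erase i := fun h => hxS (Finset.mem_of_mem_erase h)
      simp [glue, h2, hxS, insOut, hx]

lemma rdm_erase (hi : i ∈ S) (ψ : (Fin n → Fin d) → ℂ) (a b) :
    rdm (S.erase i) ψ a b = ∑ j : Fin d, rdm S ψ (insIn i S hi j a) (insIn i S hi j b) := by
  rw [rdm_apply]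
  rw [← Equiv.sum_comp (eOut i S hi) (fun c' => ψ (glue (S.erase i) a c') *
    (starRingEnd ℂ) (ψ (glue (S.erase i) b c'))), Fintype.sum_prod_type]
  refine Finset.sum_congr rfl fun j _ => ?_
  rw [rdm_apply]
  refine Finset.sum_congr rfl fun c _ => ?_
  have h1 := glue_insOut i S hi j a c
  have h2 := glue_insOut i S hi j b c
  simp only [eOut, Equiv.coe_fn_mk]
  rw [h1, h2]

lemma normSq_sum_le (f : Fin d → ℂ) :
    Complex.normSq (∑ j, f j) ≤ d * ∑ j, Complex.normSq (f j) := by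
  have h1 : Complex.normSq (∑ j, f j) = ‖∑ j, f j‖ ^ 2 := by
    rw [← Complex.sq_norm]
  have h2 : ‖∑ j, f j‖ ≤ ∑ j, ‖f j‖ := norm_sum_le _ _
  have h3 : (∑ j, ‖f j‖) ^ 2 ≤ (d : ℝ) * ∑ j, ‖f j‖ ^ 2 := by
    have := sq_sum_le_card_mul_sum_sq (s := (Finset.univ : Finset (Fin d))) (f := fun j => ‖f j‖)
    simpa using this
  have h4 : ∑ j, ‖f j‖ ^ 2 = ∑ j, Complex.normSq (f j) := by
    refine Finset.sum_congr rfl fun j _ => ?_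
    rw [← Complex.sq_norm]
  rw [h1, ← h4]
  nlinarith [norm_nonneg (∑ j, f j), Finset.sum_nonneg (fun (j : Fin d) (_ : j ∈ Finset.univ) => norm_nonneg (f j))]

lemma purity_erase_le (hi : i ∈ S) (ψ : (Fin n → Fin d) → ℂ) :
    purity (S.erase i) ψ ≤ (d : ℝ) * purity S ψ := by
  rw [purity_eq_sum_sq, purity_eq_sum_sq]
  have step1 : ∑ a, ∑ b, Complex.normSq (rdm (S.erase i) ψ a b)
      ≤ ∑ a, ∑ b, ((d:ℝ) * ∑ j : Fin d,
        Complex.normSq (rdm S ψ (insIn i S hi j a) (insIn i S hi j b))) := by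
    refine Finset.sum_le_sum fun a _ => Finset.sum_le_sum fun b _ => ?_
    rw [rdm_erase i S hi]
    exact normSq_sum_le _
  refine le_trans step1 ?_
  simp_rw [← Finset.mul_sum]
  refine mul_le_mul_of_nonneg_left ?_ (by positivity)
  -- ∑_a ∑_b ∑_j normSq (rdm S (ins j a) (ins j b)) ≤ ∑_A ∑_B normSq (rdm S A B)
  have swap : ∑ a, ∑ b, ∑ j : Fin d,
      Complex.normSq (rdm S ψ (insIn i S hi j a) (insIn i S hi j b))
      = ∑ j : Fin d, ∑ a, ∑ b,
        Complex.normSq (rdm S ψ (insIn i S hi j a) (insIn i S hi j b)) := by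
    have h1 : ∀ a : {x : Fin n // x ∈ S.erase i} → Fin d,
        (∑ b, ∑ j : Fin d, Complex.normSq (rdm S ψ (insIn i S hi j a) (insIn i S hi j b)))
        = ∑ j : Fin d, ∑ b, Complex.normSq (rdm S ψ (insIn i S hi j a) (insIn i S hi j b)) :=
      fun a => Finset.sum_comm
    simp_rw [h1]
    exact Finset.sum_comm
  rw [swap]
  have inner : ∀ (j : Fin d) (a : {x : Fin n // x ∈ S.erase i} → Fin d),
      (∑ b, Complex.normSq (rdm S ψ (insIn i S hi j a) (insIn i S hi j b)))
      ≤ ∑ B, Complex.normSq (rdm S ψ (insIn i S hi j a) B) := by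
    intro j a
    rw [← Equiv.sum_comp (eIn i S hi) (fun B => Complex.normSq (rdm S ψ (insIn i S hi j a) B)),
      Fintype.sum_prod_type]
    refine Finset.single_le_sum (f := fun j' => ∑ b, Complex.normSq
      (rdm S ψ (insIn i S hi j a) ((eIn i S hi) (j', b)))) ?_ (Finset.mem_univ j)
    intro j' _
    exact Finset.sum_nonneg fun b _ => Complex.normSq_nonneg _
  calc ∑ j : Fin d, ∑ a, ∑ b, Complex.normSq (rdm S ψ (insIn i S hi j a) (insIn i S hi j b))
      ≤ ∑ j : Fin d, ∑ a, ∑ B, Complex.normSq (rdm S ψ (insIn i S hi j a) B) := by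
        refine Finset.sum_le_sum fun j _ => Finset.sum_le_sum fun a _ => inner j a
    _ = ∑ A, ∑ B, Complex.normSq (rdm S ψ A B) := by
        rw [← Equiv.sum_comp (eIn i S hi) (fun A => ∑ B, Complex.normSq (rdm S ψ A B)),
          Fintype.sum_prod_type]
        rfl

end erase

lemma mS_compl (S : Finset (Fin n)) (x y : Fin n → Fin d) :
    mS Sᶜ x y = mS S y x := by
  funext i
  by_cases h : i ∈ S <;> simp [mS, h]

lemma pm_compl (S : Finset (Fin n)) (ψ : (Fin n → Fin d) → ℂ) :
    pm Sᶜ ψ = pm S ψ := by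
  rw [pm, pm]
  refine Finset.sum_congr rfl fun x _ => Finset.sum_congr rfl fun y _ => ?_
  rw [mS_compl, mS_compl]
  ring

lemma purity_eq_pm_re (S : Finset (Fin n)) (ψ : (Fin n → Fin d) → ℂ) :
    purity S ψ = (pm S ψ).re := by
  rw [purity, trace_eq_pm]

lemma purity_compl (S : Finset (Fin n)) (ψ : (Fin n → Fin d) → ℂ) :
    purity Sᶜ ψ = purity S ψ := by
  rw [purity_eq_pm_re, purity_eq_pm_re, pm_compl]

lemma shadow_nonneg_real (T : Finset (Fin n)) (ψ : (Fin n → Fin d) → ℂ) :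
    0 ≤ ∑ S : Finset (Fin n), (-1 : ℝ) ^ ((S ∩ T).card) * purity S ψ := by
  have h := shadow_nonneg T ψ
  rw [Complex.re_sum] at h
  refine le_trans h (le_of_eq (Finset.sum_congr rfl fun S _ => ?_))
  rw [purity_eq_pm_re]
  rcases Nat.even_or_odd ((S ∩ T).card) with he | ho
  · rw [he.neg_one_pow, he.neg_one_pow, one_mul, one_mul]
  · rw [ho.neg_one_pow, ho.neg_one_pow, neg_one_mul, neg_one_mul, Complex.neg_re]

section propagation
variable (ψ : (Fin n → Fin d) → ℂ) (ε : ℝ)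

lemma purity_propagate (hd : 2 ≤ d) (hU : IsApproxUniform d (n / 2) ε ψ) :
    ∀ (m : ℕ) (R : Finset (Fin n)), R.card + m = n / 2 →
      purity R ψ ≤ (d : ℝ) ^ m * (1 / (d : ℝ) ^ (n / 2) + ε ^ 2) := by
  intro m
  induction m with
  | zero =>
    intro R hR
    simpa using hU R (by omega)
  | succ m ih =>
    intro R hR
    have hcard_le : R.card + 1 ≤ Fintype.card (Fin n) := by
      rw [Fintype.card_fin]; omega
    obtain ⟨R', hsub, hcard⟩ := Finset.exists_superset_card_eq (le_of_lt (Nat.lt_succ_self _)) hcard_le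
    obtain ⟨i, hiR', hiR⟩ : ∃ i, i ∈ R' ∧ i ∉ R := by
      by_contra hcon
      push_neg at hcon
      have : R' ⊆ R := fun x hx => hcon x hx
      have := Finset.card_le_card this
      omega
    have hRe : R = R'.erase i := by
      apply Finset.eq_of_subset_of_card_le
      · intro x hx
        exact Finset.mem_erase.2 ⟨fun h => hiR (h ▸ hx), hsub hx⟩
      · rw [Finset.card_erase_of_mem hiR']
        omega
    have h1 : purity R ψ ≤ (d : ℝ) * purity R' ψ := by
      rw [hRe]; exact purity_erase_le i R' hiR' ψ
    have h2 : purity R' ψ ≤ (d : ℝ) ^ m * (1 / (d : ℝ) ^ (n / 2) + ε ^ 2) := by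
      apply ih; omega
    calc purity R ψ ≤ (d : ℝ) * purity R' ψ := h1
      _ ≤ (d : ℝ) * ((d : ℝ) ^ m * (1 / (d : ℝ) ^ (n / 2) + ε ^ 2)) := by
          apply mul_le_mul_of_nonneg_left h2
          positivity
      _ = (d : ℝ) ^ (m + 1) * (1 / (d : ℝ) ^ (n / 2) + ε ^ 2) := by ring

lemma purity_upper (hd : 2 ≤ d) (hε : 0 ≤ ε) (hψ : ∑ x, ‖ψ x‖ ^ 2 = 1)
    (hU : IsApproxUniform d (n / 2) ε ψ) (S : Finset (Fin n)) :
    purity S ψ ≤ 1 / (d : ℝ) ^ (min S.card (n - S.card)) +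
      (d : ℝ) ^ (2 * max (n / 2 - S.card) (S.card - (n + 1) / 2)) * ε ^ 2 := by
  have hd1 : (1 : ℝ) ≤ (d : ℝ) := by exact_mod_cast Nat.one_le_of_lt hd
  have hdpos : (0 : ℝ) < (d : ℝ) := by positivity
  have hSn : S.card ≤ n := by
    have := Finset.card_le_univ S
    simpa using this
  have key : ∀ R : Finset (Fin n), R.card ≤ n / 2 →
      purity R ψ ≤ 1 / (d : ℝ) ^ R.card + (d : ℝ) ^ (n / 2 - R.card) * ε ^ 2 := by
    intro R hR
    have h := purity_propagate ψ ε hd hU (n / 2 - R.card) R (by omega)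
    have heq : (d : ℝ) ^ (n / 2 - R.card) * (1 / (d : ℝ) ^ (n / 2) + ε ^ 2)
        = 1 / (d : ℝ) ^ R.card + (d : ℝ) ^ (n / 2 - R.card) * ε ^ 2 := by
      have hsplit : (d : ℝ) ^ (n / 2) = (d : ℝ) ^ (n / 2 - R.card) * (d : ℝ) ^ R.card := by
        rw [← pow_add]; congr 1; omega
      field_simp [hsplit]
      rw [hsplit]; ring
    rw [heq] at h
    exact h
  rcases le_or_gt S.card (n / 2) with hle | hgt
  · have h := key S hle
    have hmin : min S.card (n - S.card) = S.card := by omega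
    rw [hmin]
    have hexp : (d : ℝ) ^ (n / 2 - S.card) ≤
        (d : ℝ) ^ (2 * max (n / 2 - S.card) (S.card - (n + 1) / 2)) := by
      apply pow_le_pow_right₀ hd1
      have : n / 2 - S.card ≤ max (n / 2 - S.card) (S.card - (n + 1) / 2) := le_max_left _ _
      omega
    nlinarith [sq_nonneg ε]
  · have hcompl : purity S ψ = purity Sᶜ ψ := (purity_compl S ψ).symm
    have hcc : Sᶜ.card = n - S.card := by
      rw [Finset.card_compl, Fintype.card_fin]
    have hle' : Sᶜ.card ≤ n / 2 := by omega
    have h := key Sᶜ hle'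
    rw [hcc] at h
    have hmin : min S.card (n - S.card) = n - S.card := by omega
    rw [hmin, hcompl]
    have hexp : (d : ℝ) ^ (n / 2 - (n - S.card)) ≤
        (d : ℝ) ^ (2 * max (n / 2 - S.card) (S.card - (n + 1) / 2)) := by
      apply pow_le_pow_right₀ hd1
      have h1 : n / 2 - (n - S.card) = S.card - (n + 1) / 2 := by omega
      have h2 : S.card - (n + 1) / 2 ≤ max (n / 2 - S.card) (S.card - (n + 1) / 2) :=
        le_max_right _ _
      omega
    nlinarith [sq_nonneg ε]

lemma purity_lower_min (hd : 2 ≤ d) (hψ : ∑ x, ‖ψ x‖ ^ 2 = 1) (S : Finset (Fin n)) :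
    1 / (d : ℝ) ^ (min S.card (n - S.card)) ≤ purity S ψ := by
  have hd0 : 0 < d := by omega
  rcases le_or_gt S.card (n - S.card) with hle | hgt
  · rw [min_eq_left hle]
    exact purity_lower hd0 S ψ hψ
  · rw [min_eq_right (le_of_lt hgt)]
    have hcc : Sᶜ.card = n - S.card := by
      rw [Finset.card_compl, Fintype.card_fin]
    have := purity_lower hd0 Sᶜ ψ hψ
    rw [hcc, purity_compl] at this
    exact this

end propagation

lemma counting (T : Finset (Fin n)) :
    ∑ S : Finset (Fin n), (if Even ((S ∩ T).card) then
      (d : ℝ) ^ (2 * max (n / 2 - S.card) (S.card - (n + 1) / 2)) else 0)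
    = fDNT d n T.card := by
  classical
  set t := T.card with ht
  set bb : ℕ → ℝ := fun k => (d : ℝ) ^ (2 * max (n / 2 - k) (k - (n + 1) / 2)) with hbb
  set F : ℕ → ℕ → ℝ := fun a b => if Even a then bb (a + b) else 0 with hF
  have hTc : Tᶜ.card = n - t := by rw [Finset.card_compl, Fintype.card_fin]
  -- Step A+B: reindex by (S ∩ T, S \ T)
  have stepB : ∑ S : Finset (Fin n), (if Even ((S ∩ T).card) then bb S.card else 0)
      = ∑ p ∈ T.powerset ×ˢ Tᶜ.powerset, F p.1.card p.2.card := by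
    refine Finset.sum_nbij' (fun S => (S ∩ T, S \ T)) (fun p => p.1 ∪ p.2) ?_ ?_ ?_ ?_ ?_
    · intro S _
      rw [Finset.mem_product]
      constructor
      · exact Finset.mem_powerset.2 (Finset.inter_subset_right)
      · refine Finset.mem_powerset.2 fun x hx => ?_
        rw [Finset.mem_compl]
        exact (Finset.mem_sdiff.1 hx).2
    · intro p _; exact Finset.mem_univ _
    · intro S _
      simp only
      ext x
      simp only [Finset.mem_union, Finset.mem_inter, Finset.mem_sdiff]
      tauto
    · intro p hp
      rw [Finset.mem_product, Finset.mem_powerset, Finset.mem_powerset] at hp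
      obtain ⟨h1, h2⟩ := hp
      have hdisj : ∀ x ∈ p.2, x ∉ T := fun x hx => Finset.mem_compl.1 (h2 hx)
      ext1
      · ext x
        simp only [Finset.mem_inter, Finset.mem_union]
        constructor
        · rintro ⟨hx | hx, hxT⟩
          · exact hx
          · exact absurd hxT (hdisj x hx)
        · intro hx; exact ⟨Or.inl hx, h1 hx⟩
      · ext x
        simp only [Finset.mem_sdiff, Finset.mem_union]
        constructor
        · rintro ⟨hx | hx, hxT⟩
          · exact absurd (h1 hx) hxT
          · exact hx
        · intro hx; exact ⟨Or.inr hx, hdisj x hx⟩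
    · intro S _
      simp only [hF]
      have hc : S.card = (S ∩ T).card + (S \ T).card :=
        (Finset.card_inter_add_card_sdiff S T).symm
      rw [hc]
  -- Step C+D: powersets to binomials
  have stepD : ∑ p ∈ T.powerset ×ˢ Tᶜ.powerset, F p.1.card p.2.card
      = ∑ a ∈ Finset.range (t + 1), ∑ b ∈ Finset.range (n - t + 1),
        (t.choose a : ℝ) * ((n - t).choose b : ℝ) * F a b := by
    rw [Finset.sum_product]
    rw [Finset.sum_powerset]
    rw [ht]
    refine Finset.sum_congr rfl fun a _ => ?_
    have inner : ∀ A : Finset (Fin n),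
        (∑ B ∈ Tᶜ.powerset, F A.card B.card)
        = ∑ b ∈ Finset.range (n - t + 1), ((n - t).choose b : ℝ) * F A.card b := by
      intro A
      rw [Finset.sum_powerset, hTc]
      refine Finset.sum_congr rfl fun b hb => ?_
      have : ∀ B ∈ Finset.powersetCard b Tᶜ, F A.card B.card = F A.card b := by
        intro B hB
        rw [(Finset.mem_powersetCard.1 hB).2]
      rw [Finset.sum_congr rfl this, Finset.sum_const, Finset.card_powersetCard, hTc,
        nsmul_eq_mul]
    have houter : ∀ A ∈ Finset.powersetCard a T, (∑ B ∈ Tᶜ.powerset, F A.card B.card)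
        = ∑ b ∈ Finset.range (n - t + 1), ((n - t).choose b : ℝ) * F a b := by
      intro A hA
      rw [inner A, (Finset.mem_powersetCard.1 hA).2]
    rw [Finset.sum_congr rfl houter, Finset.sum_const, Finset.card_powersetCard,
      nsmul_eq_mul, Finset.mul_sum]
    refine Finset.sum_congr rfl fun b _ => ?_
    ring
  -- Step E: even reindex
  have stepE : ∑ a ∈ Finset.range (t + 1), ∑ b ∈ Finset.range (n - t + 1),
        (t.choose a : ℝ) * ((n - t).choose b : ℝ) * F a b
      = fDNT d n t := by
    rw [fDNT]
    have hsummand : ∀ a ∈ Finset.range (t + 1),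
        (∑ b ∈ Finset.range (n - t + 1), (t.choose a : ℝ) * ((n - t).choose b : ℝ) * F a b)
        = if Even a then (∑ b ∈ Finset.range (n - t + 1),
            (t.choose a : ℝ) * ((n - t).choose b : ℝ) * bb (a + b)) else 0 := by
      intro a _
      by_cases he : Even a
      · rw [if_pos he]
        refine Finset.sum_congr rfl fun b _ => ?_
        rw [hF]; simp only [if_pos he]
      · rw [if_neg he]
        refine Finset.sum_eq_zero fun b _ => ?_
        rw [hF]; simp only [if_neg he, mul_zero]
    rw [Finset.sum_congr rfl hsummand]
    rw [← Finset.sum_filter]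
    refine Finset.sum_nbij' (fun a => a / 2) (fun l => 2 * l) ?_ ?_ ?_ ?_ ?_
    · intro a ha
      rw [Finset.mem_filter, Finset.mem_range] at ha
      obtain ⟨hlt, c, hc⟩ := ha
      simp only [Finset.mem_range]
      omega
    · intro l hl
      rw [Finset.mem_range] at hl
      simp only [Finset.mem_filter, Finset.mem_range]
      exact ⟨by omega, even_two_mul l⟩
    · intro a ha
      rw [Finset.mem_filter] at ha
      obtain ⟨-, c, hc⟩ := ha
      omega
    · intro l _
      omega
    · intro a ha
      rw [Finset.mem_filter] at ha
      obtain ⟨-, he⟩ := ha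
      have h2 : 2 * (a / 2) = a := by
        obtain ⟨c, hc⟩ := he; omega
      rw [h2]
  rw [stepB, stepD, stepE]

theorem fDNT_pos (hd : 2 ≤ d) (T : Finset (Fin n)) : 0 < fDNT d n T.card := by
  rw [← counting T]
  apply Finset.sum_pos'
  · intro S _
    split
    · positivity
    · exact le_refl 0
  · refine ⟨∅, Finset.mem_univ _, ?_⟩
    have h0 : ((∅ : Finset (Fin n)) ∩ T).card = 0 := by simp
    rw [h0]
    simp only [Even.zero, if_true]
    positivity

/-- If exact AME(n,d) states are excluded by a violated shadow
inequality `s_T(ρ) < 0`, then no ε-approximate AME(n,d) state (i.e. ε-approximate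
⌊n/2⌋-uniform state) exists for `ε < √(−s_T(ρ)/f(d,n,t))`, `t = |T|`. -/
theorem no_approx_AME_of_shadow_violation {n d : ℕ} (hd : 2 ≤ d) (hn : 0 < n)
    (T : Finset (Fin n)) (ε : ℝ) (hε : 0 ≤ ε)
    (hviol : sExactAME d n T < 0)
    (hεsmall : ε < Real.sqrt (-sExactAME d n T / fDNT d n T.card)) :
    ¬ ∃ ψ : (Fin n → Fin d) → ℂ,
        (∑ x, ‖ψ x‖ ^ 2 = 1) ∧ IsApproxUniform d (n / 2) ε ψ := by
  rintro ⟨ψ, hψ, hU⟩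
  have hf : 0 < fDNT d n T.card := fDNT_pos hd T
  have hq : 0 < -sExactAME d n T / fDNT d n T.card := by
    apply div_pos (by linarith) hf
  have hε2 : ε ^ 2 < -sExactAME d n T / fDNT d n T.card := by
    have := (Real.lt_sqrt hε).1 hεsmall
    linarith
  have hε2' : fDNT d n T.card * ε ^ 2 < -sExactAME d n T := by
    rw [lt_div_iff₀ hf] at hε2
    linarith [hε2]
  -- shadow inequality
  have hshadow := shadow_nonneg_real T ψ
  -- termwise bound
  have hterm : ∀ S : Finset (Fin n),
      (-1 : ℝ) ^ ((S ∩ T).card) * purity S ψ ≤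
        (-1 : ℝ) ^ ((S ∩ T).card) / (d : ℝ) ^ (min S.card (n - S.card)) +
        (if Even ((S ∩ T).card) then
          (d : ℝ) ^ (2 * max (n / 2 - S.card) (S.card - (n + 1) / 2)) else 0) * ε ^ 2 := by
    intro S
    rcases Nat.even_or_odd ((S ∩ T).card) with he | ho
    · rw [he.neg_one_pow, if_pos he, one_mul]
      have := purity_upper ψ ε hd hε hψ hU S
      calc purity S ψ ≤ 1 / (d : ℝ) ^ (min S.card (n - S.card)) +
            (d : ℝ) ^ (2 * max (n / 2 - S.card) (S.card - (n + 1) / 2)) * ε ^ 2 := this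
        _ = 1 / (d : ℝ) ^ (min S.card (n - S.card)) +
            (d : ℝ) ^ (2 * max (n / 2 - S.card) (S.card - (n + 1) / 2)) * ε ^ 2 := rfl
    · rw [ho.neg_one_pow, if_neg (by simpa using ho), zero_mul, add_zero, neg_one_mul]
      have := purity_lower_min ψ hd hψ S
      have heq : (-1 : ℝ) / (d : ℝ) ^ (min S.card (n - S.card))
          = -(1 / (d : ℝ) ^ (min S.card (n - S.card))) := by ring
      rw [heq]
      linarith
  have hsum : ∑ S : Finset (Fin n), (-1 : ℝ) ^ ((S ∩ T).card) * purity S ψ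
      ≤ sExactAME d n T + fDNT d n T.card * ε ^ 2 := by
    calc ∑ S : Finset (Fin n), (-1 : ℝ) ^ ((S ∩ T).card) * purity S ψ
        ≤ ∑ S : Finset (Fin n), ((-1 : ℝ) ^ ((S ∩ T).card) / (d : ℝ) ^ (min S.card (n - S.card)) +
          (if Even ((S ∩ T).card) then
            (d : ℝ) ^ (2 * max (n / 2 - S.card) (S.card - (n + 1) / 2)) else 0) * ε ^ 2) :=
          Finset.sum_le_sum fun S _ => hterm S
      _ = sExactAME d n T + (∑ S : Finset (Fin n), (if Even ((S ∩ T).card) then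
            (d : ℝ) ^ (2 * max (n / 2 - S.card) (S.card - (n + 1) / 2)) else 0)) * ε ^ 2 := by
          rw [Finset.sum_add_distrib, Finset.sum_mul]
          rfl
      _ = sExactAME d n T + fDNT d n T.card * ε ^ 2 := by rw [counting T]
  linarith

end ApproxKUniform
end
end

section
/- For any rank-K projector P and any subset S, KB'_S(P,P) − A'_S(P,P) ≥ 0, where A'_S(P,P) = Tr(P_S²) and B'_S(P,P) = Tr(P_{S^c}²), P_T denoting the partial trace of P onto subsystem T. -/
open scoped BigOperators Matrix
open Matrix

noncomputable section

namespace ApproxKUniform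

variable {n d : ℕ}

/-- Rains unitary enumerator `A'_S(P,P) = Tr(P_S²)`. -/
def enumA {n d : ℕ} (S : Finset (Fin n))
    (P : Matrix (Fin n → Fin d) (Fin n → Fin d) ℂ) : ℝ :=
  ((optrace S P * optrace S P).trace).re

/-- Rains unitary enumerator `B'_S(P,P) = Tr(P_{S^c}²)`. -/
def enumB {n d : ℕ} (S : Finset (Fin n))
    (P : Matrix (Fin n → Fin d) (Fin n → Fin d) ℂ) : ℝ :=
  ((optrace Sᶜ P * optrace Sᶜ P).trace).re



private lemma sum_comm4 {α β γ δ M : Type*} [Fintype α] [Fintype β] [Fintype γ] [Fintype δ]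
    [AddCommMonoid M] (f : α → β → γ → δ → M) :
    ∑ a, ∑ b, ∑ c, ∑ d, f a b c d = ∑ c, ∑ d, ∑ a, ∑ b, f a b c d := by
  calc ∑ a, ∑ b, ∑ c, ∑ d, f a b c d
      = ∑ a, ∑ c, ∑ b, ∑ d, f a b c d :=
        Finset.sum_congr rfl fun a _ => Finset.sum_comm
    _ = ∑ c, ∑ a, ∑ b, ∑ d, f a b c d := Finset.sum_comm
    _ = ∑ c, ∑ a, ∑ d, ∑ b, f a b c d :=
        Finset.sum_congr rfl fun c _ => Finset.sum_congr rfl fun a _ => Finset.sum_comm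
    _ = ∑ c, ∑ d, ∑ a, ∑ b, f a b c d :=
        Finset.sum_congr rfl fun c _ => Finset.sum_comm

private lemma eucl_norm_sq {α : Type*} [Fintype α] (x : EuclideanSpace ℂ α) :
    ‖x‖ ^ 2 = ∑ p, Complex.normSq (x p) := by
  rw [EuclideanSpace.norm_eq, Real.sq_sqrt (Finset.sum_nonneg fun p _ => sq_nonneg _)]
  refine Finset.sum_congr rfl fun p _ => ?_
  rw [Complex.sq_norm]

private lemma core {ι A C : Type*} [Fintype ι] [Fintype A] [Fintype C]
    (u : ι → A → C → ℂ) (c : ι → ℝ) (hc : ∀ i, c i ^ 2 = c i) (K : ℝ)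
    (hK : ∑ i, c i = K) :
    ∑ a : A, ∑ b : A,
        ((∑ i, (c i : ℂ) * ∑ e, u i a e * (starRingEnd ℂ) (u i b e)) *
          (∑ i, (c i : ℂ) * ∑ e, u i b e * (starRingEnd ℂ) (u i a e))).re
      ≤ K * ∑ e : C, ∑ f : C,
        ((∑ i, (c i : ℂ) * ∑ a, u i a e * (starRingEnd ℂ) (u i a f)) *
          (∑ i, (c i : ℂ) * ∑ a, u i a f * (starRingEnd ℂ) (u i a e))).re := by
  classical
  have hc0 : ∀ i, 0 ≤ c i := fun i => (hc i) ▸ sq_nonneg (c i)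
  have hK0 : 0 ≤ K := hK ▸ Finset.sum_nonneg fun i _ => hc0 i
  set f : ι → EuclideanSpace ℂ (A × A) := fun i =>
    (WithLp.toLp 2 (fun p : A × A => (c i : ℂ) * ∑ e, u i p.1 e * (starRingEnd ℂ) (u i p.2 e)) :
      EuclideanSpace ℂ (A × A)) with hf
  set g : ι → EuclideanSpace ℂ (C × C) := fun i =>
    (WithLp.toLp 2 (fun p : C × C => (c i : ℂ) * ∑ a, u i a p.1 * (starRingEnd ℂ) (u i a p.2)) :
      EuclideanSpace ℂ (C × C)) with hg
  have hfp : ∀ i (p : A × A),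
      f i p = (c i : ℂ) * ∑ e, u i p.1 e * (starRingEnd ℂ) (u i p.2 e) := fun _ _ => rfl
  have hgp : ∀ i (p : C × C),
      g i p = (c i : ℂ) * ∑ a, u i a p.1 * (starRingEnd ℂ) (u i a p.2) := fun _ _ => rfl
  -- conjugate symmetry of entries
  have hfc : ∀ i (a b : A), f i (b, a) = (starRingEnd ℂ) (f i (a, b)) := by
    intro i a b
    rw [hfp, hfp, _root_.map_mul, map_sum, Complex.conj_ofReal]
    congr 1
    refine Finset.sum_congr rfl fun e _ => ?_
    rw [_root_.map_mul, Complex.conj_conj, mul_comm]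
  -- LHS as a squared norm
  have h1 : ∑ a : A, ∑ b : A,
      ((∑ i, (c i : ℂ) * ∑ e, u i a e * (starRingEnd ℂ) (u i b e)) *
        (∑ i, (c i : ℂ) * ∑ e, u i b e * (starRingEnd ℂ) (u i a e))).re
      = ‖∑ i, f i‖ ^ 2 := by
    rw [eucl_norm_sq, Fintype.sum_prod_type]
    refine Finset.sum_congr rfl fun a _ => Finset.sum_congr rfl fun b _ => ?_
    have e1 : (∑ i, f i : EuclideanSpace ℂ (A × A)) (a, b) = ∑ i, f i (a, b) := by
      rw [WithLp.ofLp_sum]; exact Finset.sum_apply _ _ _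
    have e2 : (∑ i, (c i : ℂ) * ∑ e, u i b e * (starRingEnd ℂ) (u i a e))
        = (starRingEnd ℂ) (∑ i, f i (a, b)) := by
      rw [map_sum]
      exact Finset.sum_congr rfl fun i _ => (hfp i (b, a)).symm.trans (hfc i a b)
    rw [e2, e1]
    have : (∑ i, f i (a, b)) * (starRingEnd ℂ) (∑ i, f i (a, b))
        = (Complex.normSq (∑ i, f i (a, b)) : ℂ) := Complex.mul_conj _
    rw [show (∑ i, (c i : ℂ) * ∑ e, u i a e * (starRingEnd ℂ) (u i b e))
        = ∑ i, f i (a, b) from rfl, this, Complex.ofReal_re]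
  -- RHS (inner part) as a squared norm
  have h7 : ∑ e : C, ∑ f' : C,
      ((∑ i, (c i : ℂ) * ∑ a, u i a e * (starRingEnd ℂ) (u i a f')) *
        (∑ i, (c i : ℂ) * ∑ a, u i a f' * (starRingEnd ℂ) (u i a e))).re
      = ‖∑ i, g i‖ ^ 2 := by
    have hgc : ∀ i (e f' : C), g i (f', e) = (starRingEnd ℂ) (g i (e, f')) := by
      intro i e f'
      rw [hgp, hgp, _root_.map_mul, map_sum, Complex.conj_ofReal]
      congr 1
      refine Finset.sum_congr rfl fun a _ => ?_
      rw [_root_.map_mul, Complex.conj_conj, mul_comm]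
    rw [eucl_norm_sq, Fintype.sum_prod_type]
    refine Finset.sum_congr rfl fun e _ => Finset.sum_congr rfl fun f' _ => ?_
    have e1 : (∑ i, g i : EuclideanSpace ℂ (C × C)) (e, f') = ∑ i, g i (e, f') := by
      rw [WithLp.ofLp_sum]; exact Finset.sum_apply _ _ _
    have e2 : (∑ i, (c i : ℂ) * ∑ a, u i a f' * (starRingEnd ℂ) (u i a e))
        = (starRingEnd ℂ) (∑ i, g i (e, f')) := by
      rw [map_sum]
      exact Finset.sum_congr rfl fun i _ => (hgp i (f', e)).symm.trans (hgc i e f')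
    rw [e2, e1]
    have : (∑ i, g i (e, f')) * (starRingEnd ℂ) (∑ i, g i (e, f'))
        = (Complex.normSq (∑ i, g i (e, f')) : ℂ) := Complex.mul_conj _
    rw [show (∑ i, (c i : ℂ) * ∑ a, u i a e * (starRingEnd ℂ) (u i a f'))
        = ∑ i, g i (e, f') from rfl, this, Complex.ofReal_re]
  -- the mirror identity
  have key : ∀ (i j : ι), (inner ℂ (g i) (g j) : ℂ)
      = ((c i * c j : ℝ) : ℂ) *
        ∑ a : A, ∑ b : A,
          (Complex.normSq (∑ e, u i a e * (starRingEnd ℂ) (u j b e)) : ℂ) := by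
    intro i j
    have hinner : (inner ℂ (g i) (g j) : ℂ) = ∑ p : C × C, (starRingEnd ℂ) (g i p) * g j p := by
      rw [PiLp.inner_apply]
      refine Finset.sum_congr rfl fun p _ => ?_
      rw [RCLike.inner_apply]; ring
    rw [hinner, Fintype.sum_prod_type]
    have step1 : ∀ (e f' : C), (starRingEnd ℂ) (g i (e, f')) * g j (e, f')
        = ((c i * c j : ℝ) : ℂ) * ∑ a : A, ∑ b : A,
            ((starRingEnd ℂ) (u i a e) * u i a f') * (u j b e * (starRingEnd ℂ) (u j b f')) := by
      intro e f'
      rw [hgp, hgp, _root_.map_mul, map_sum, Complex.conj_ofReal]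
      have expand : (∑ a, (starRingEnd ℂ) (u i a e * (starRingEnd ℂ) (u i a f')))
          * (∑ b, u j b e * (starRingEnd ℂ) (u j b f'))
          = ∑ a : A, ∑ b : A,
            ((starRingEnd ℂ) (u i a e) * u i a f') * (u j b e * (starRingEnd ℂ) (u j b f')) := by
        rw [Finset.sum_mul_sum]
        refine Finset.sum_congr rfl fun a _ => Finset.sum_congr rfl fun b _ => ?_
        rw [_root_.map_mul, Complex.conj_conj]
      calc ((c i : ℂ) * ∑ a, (starRingEnd ℂ) (u i a e * (starRingEnd ℂ) (u i a f'))) *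
            ((c j : ℂ) * ∑ b, u j b e * (starRingEnd ℂ) (u j b f'))
          = ((c i : ℂ) * (c j : ℂ)) *
            ((∑ a, (starRingEnd ℂ) (u i a e * (starRingEnd ℂ) (u i a f'))) *
              (∑ b, u j b e * (starRingEnd ℂ) (u j b f'))) := by ring
        _ = _ := by rw [expand, Complex.ofReal_mul]
    calc ∑ e, ∑ f', (starRingEnd ℂ) (g i (e, f')) * g j (e, f')
        = ∑ e, ∑ f', ((c i * c j : ℝ) : ℂ) * ∑ a : A, ∑ b : A,
            ((starRingEnd ℂ) (u i a e) * u i a f') * (u j b e * (starRingEnd ℂ) (u j b f')) :=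
          Finset.sum_congr rfl fun e _ => Finset.sum_congr rfl fun f' _ => step1 e f'
      _ = ((c i * c j : ℝ) : ℂ) * ∑ e, ∑ f', ∑ a : A, ∑ b : A,
            ((starRingEnd ℂ) (u i a e) * u i a f') * (u j b e * (starRingEnd ℂ) (u j b f')) := by
          rw [Finset.mul_sum]
          exact Finset.sum_congr rfl fun e _ => (Finset.mul_sum _ _ _).symm
      _ = ((c i * c j : ℝ) : ℂ) * ∑ a : A, ∑ b : A, ∑ e, ∑ f',
            ((starRingEnd ℂ) (u i a e) * u i a f') * (u j b e * (starRingEnd ℂ) (u j b f')) := by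
          rw [sum_comm4]
      _ = _ := by
          congr 1
          refine Finset.sum_congr rfl fun a _ => Finset.sum_congr rfl fun b _ => ?_
          have regroup : ∑ e, ∑ f',
              ((starRingEnd ℂ) (u i a e) * u i a f') * (u j b e * (starRingEnd ℂ) (u j b f'))
              = (∑ e, (starRingEnd ℂ) (u i a e) * u j b e) *
                (∑ f', u i a f' * (starRingEnd ℂ) (u j b f')) := by
            rw [Finset.sum_mul_sum]
            exact Finset.sum_congr rfl fun e _ => Finset.sum_congr rfl fun f' _ => by ring
          rw [regroup]
          have : (∑ e, (starRingEnd ℂ) (u i a e) * u j b e)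
              = (starRingEnd ℂ) (∑ e, u i a e * (starRingEnd ℂ) (u j b e)) := by
            rw [map_sum]
            exact Finset.sum_congr rfl fun e _ => by
              rw [_root_.map_mul, Complex.conj_conj]
          rw [this, mul_comm, Complex.mul_conj]
  have hkeyre : ∀ (i j : ι), ((inner ℂ (g i) (g j) : ℂ)).re
      = (c i * c j) * ∑ a : A, ∑ b : A,
          Complex.normSq (∑ e, u i a e * (starRingEnd ℂ) (u j b e)) := by
    intro i j
    rw [key i j]
    have hcast : (∑ a : A, ∑ b : A,
        (Complex.normSq (∑ e, u i a e * (starRingEnd ℂ) (u j b e)) : ℂ))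
        = ((∑ a : A, ∑ b : A,
            Complex.normSq (∑ e, u i a e * (starRingEnd ℂ) (u j b e)) : ℝ) : ℂ) := by
      push_cast
      rfl
    rw [hcast, ← Complex.ofReal_mul, Complex.ofReal_re]
  have hnonneg : ∀ (i j : ι), 0 ≤ ((inner ℂ (g i) (g j) : ℂ)).re := by
    intro i j
    rw [hkeyre]
    exact mul_nonneg (mul_nonneg (hc0 i) (hc0 j))
      (Finset.sum_nonneg fun a _ => Finset.sum_nonneg fun b _ => Complex.normSq_nonneg _)
  have hfg : ∀ i : ι, ‖f i‖ ^ 2 = ((inner ℂ (g i) (g i) : ℂ)).re := by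
    intro i
    rw [hkeyre, eucl_norm_sq, Fintype.sum_prod_type, Finset.mul_sum]
    refine Finset.sum_congr rfl fun a _ => ?_
    rw [Finset.mul_sum]
    refine Finset.sum_congr rfl fun b _ => ?_
    rw [hfp i (a, b), Complex.normSq_mul, Complex.normSq_ofReal]
  have hsmul : ∀ i : ι, (c i) • f i = f i := by
    intro i
    ext p
    show (c i) • (f i p) = f i p
    rw [hfp i p, Complex.real_smul, ← mul_assoc, ← Complex.ofReal_mul, ← sq, hc]
  have hfnorm : ∀ i : ι, ‖f i‖ = c i * ‖f i‖ := by
    intro i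
    conv_lhs => rw [← hsmul i]
    rw [norm_smul, Real.norm_eq_abs, abs_of_nonneg (hc0 i)]
  have step2 : ‖∑ i, f i‖ ^ 2 ≤ (∑ i, c i * ‖f i‖) ^ 2 := by
    have hle : ‖∑ i, f i‖ ≤ ∑ i, c i * ‖f i‖ := by
      refine (norm_sum_le _ _).trans (le_of_eq ?_)
      exact Finset.sum_congr rfl fun i _ => hfnorm i
    exact pow_le_pow_left₀ (norm_nonneg _) hle 2
  have step3 : (∑ i, c i * ‖f i‖) ^ 2 ≤ K * ∑ i, ‖f i‖ ^ 2 := by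
    refine (Finset.sum_mul_sq_le_sq_mul_sq Finset.univ c (fun i => ‖f i‖)).trans (le_of_eq ?_)
    congr 1
    rw [← hK]
    exact Finset.sum_congr rfl fun i _ => hc i
  have step4 : ∑ i, ‖f i‖ ^ 2 ≤ ‖∑ i, g i‖ ^ 2 := by
    have h5 : ∑ i, ‖f i‖ ^ 2 ≤ ∑ i : ι, ∑ j : ι, ((inner ℂ (g i) (g j) : ℂ)).re := by
      calc ∑ i, ‖f i‖ ^ 2 = ∑ i : ι, ((inner ℂ (g i) (g i) : ℂ)).re :=
            Finset.sum_congr rfl fun i _ => hfg i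
        _ ≤ ∑ i : ι, ∑ j : ι, ((inner ℂ (g i) (g j) : ℂ)).re :=
            Finset.sum_le_sum fun i _ =>
              Finset.single_le_sum (fun j _ => hnonneg i j) (Finset.mem_univ i)
    have h6 : ∑ i : ι, ∑ j : ι, ((inner ℂ (g i) (g j) : ℂ)).re = ‖∑ i, g i‖ ^ 2 := by
      have := inner_self_eq_norm_sq (𝕜 := ℂ) (∑ i, g i)
      rw [← this, sum_inner, map_sum]
      refine Finset.sum_congr rfl fun i _ => ?_
      rw [inner_sum, map_sum]
      exact Finset.sum_congr rfl fun j _ => by simp [RCLike.re_to_complex]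
    exact h6 ▸ h5
  rw [h1, h7]
  calc ‖∑ i, f i‖ ^ 2 ≤ (∑ i, c i * ‖f i‖) ^ 2 := step2
    _ ≤ K * ∑ i, ‖f i‖ ^ 2 := step3
    _ ≤ K * ‖∑ i, g i‖ ^ 2 := mul_le_mul_of_nonneg_left step4 hK0


private lemma udu_apply {X : Type*} [Fintype X] [DecidableEq X]
    (U : Matrix X X ℂ) (lam : X → ℝ) (x y : X) :
    (U * Matrix.diagonal (fun i => (lam i : ℂ)) * star U) x y
      = ∑ i, (lam i : ℂ) * (U x i * (starRingEnd ℂ) (U y i)) := by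
  rw [Matrix.mul_apply]
  refine Finset.sum_congr rfl fun j _ => ?_
  rw [Matrix.mul_diagonal, Matrix.star_apply]
  rw [show (star (U y j)) = (starRingEnd ℂ) (U y j) from rfl]
  ring


private lemma glue_compl {n d : ℕ} (S : Finset (Fin n))
    (a : {i : Fin n // i ∈ S} → Fin d) (e : {i : Fin n // i ∉ S} → Fin d) :
    glue Sᶜ (fun x : {i : Fin n // i ∈ Sᶜ} => e ⟨x.1, Finset.mem_compl.mp x.2⟩)
        (fun x : {i : Fin n // i ∉ Sᶜ} => a ⟨x.1, by simpa using x.2⟩)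
      = glue S a e := by
  funext i
  by_cases hi : i ∈ S
  · have hi' : i ∉ Sᶜ := by simp [hi]
    simp only [glue, dif_neg hi', dif_pos hi]
  · have hi' : i ∈ Sᶜ := by simp [hi]
    simp only [glue, dif_pos hi', dif_neg hi]

private lemma trace_sq_re {α : Type*} [Fintype α] [DecidableEq α] (M : Matrix α α ℂ) :
    ((M * M).trace).re = ∑ a, ∑ b, (M a b * M b a).re := by
  rw [Matrix.trace]
  rw [show ∑ a, (M * M).diag a = ∑ a, ∑ b, M a b * M b a from
    Finset.sum_congr rfl fun a _ => Matrix.mul_apply]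
  rw [Complex.re_sum]
  exact Finset.sum_congr rfl fun a _ => Complex.re_sum _ _

/-- For any rank-`K` projector `P` on `n` qudits and any subset `S`,
`K·B'_S(P,P) − A'_S(P,P) ≥ 0`. -/
theorem enum_nonneg {n d K : ℕ}
    (P : Matrix (Fin n → Fin d) (Fin n → Fin d) ℂ)
    (hP : P.IsHermitian) (hproj : P * P = P) (hrank : P.trace = K)
    (S : Finset (Fin n)) :
    0 ≤ (K : ℝ) * enumB S P - enumA S P := by
  classical
  set U : Matrix (Fin n → Fin d) (Fin n → Fin d) ℂ :=
    (hP.eigenvectorUnitary : Matrix (Fin n → Fin d) (Fin n → Fin d) ℂ) with hU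
  set lam : (Fin n → Fin d) → ℝ := hP.eigenvalues with hlam
  have hUU : U * star U = 1 := Matrix.mem_unitaryGroup_iff.mp hP.eigenvectorUnitary.2
  have hdiag : star U * P * U = Matrix.diagonal (fun i => (lam i : ℂ)) :=
    by
      have := hP.conjStarAlgAut_star_eigenvectorUnitary
      rw [Unitary.conjStarAlgAut_apply] at this
      simp only [Unitary.coe_star, star_star] at this
      exact this
  have hspec : P = U * Matrix.diagonal (fun i => (lam i : ℂ)) * star U :=
    by
      have := hP.spectral_theorem
      rw [Unitary.conjStarAlgAut_apply] at this
      exact this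
  have hdec : ∀ x y, P x y = ∑ i, (lam i : ℂ) * (U x i * (starRingEnd ℂ) (U y i)) := by
    intro x y
    conv_lhs => rw [hspec]
    exact udu_apply U lam x y
  have hidem : ∀ i, lam i ^ 2 = lam i := by
    intro i
    have h2 : Matrix.diagonal (fun i => (lam i : ℂ)) * Matrix.diagonal (fun i => (lam i : ℂ))
        = Matrix.diagonal (fun i => (lam i : ℂ)) := by
      rw [← hdiag]
      calc (star U * P * U) * (star U * P * U)
          = star U * (P * ((U * star U) * (P * U))) := by
            simp only [Matrix.mul_assoc]
        _ = star U * (P * (P * U)) := by rw [hUU, Matrix.one_mul]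
        _ = star U * ((P * P) * U) := by rw [Matrix.mul_assoc]
        _ = star U * (P * U) := by rw [hproj]
        _ = star U * P * U := by rw [Matrix.mul_assoc]
    rw [Matrix.diagonal_mul_diagonal] at h2
    have h3 := congrArg (fun M : Matrix (Fin n → Fin d) (Fin n → Fin d) ℂ => M i i) h2
    simp only [Matrix.diagonal_apply_eq] at h3
    have h4 : ((lam i * lam i : ℝ) : ℂ) = ((lam i : ℝ) : ℂ) := by push_cast; exact h3
    have h5 := Complex.ofReal_injective h4
    rw [sq]; exact h5
  have htr : ∑ i, lam i = (K : ℝ) := by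
    have h1 : (Matrix.diagonal (fun i => (lam i : ℂ))).trace = P.trace := by
      rw [← hdiag, Matrix.trace_mul_cycle, hUU, Matrix.one_mul]
    rw [Matrix.trace_diagonal, hrank] at h1
    exact_mod_cast h1
  -- reduction of enumA
  have hM : ∀ (a b : {i : Fin n // i ∈ S} → Fin d), optrace S P a b
      = ∑ i, (lam i : ℂ) * ∑ e, U (glue S a e) i * (starRingEnd ℂ) (U (glue S b e) i) := by
    intro a b
    calc optrace S P a b = ∑ e, P (glue S a e) (glue S b e) := rfl
      _ = ∑ e, ∑ i, (lam i : ℂ) * (U (glue S a e) i * (starRingEnd ℂ) (U (glue S b e) i)) :=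
          Finset.sum_congr rfl fun e _ => hdec _ _
      _ = ∑ i, ∑ e, (lam i : ℂ) * (U (glue S a e) i * (starRingEnd ℂ) (U (glue S b e) i)) :=
          Finset.sum_comm
      _ = _ := Finset.sum_congr rfl fun i _ => (Finset.mul_sum _ _ _).symm
  have hAred : enumA S P = ∑ a, ∑ b,
      ((∑ i, (lam i : ℂ) * ∑ e, U (glue S a e) i * (starRingEnd ℂ) (U (glue S b e) i)) *
        (∑ i, (lam i : ℂ) * ∑ e, U (glue S b e) i * (starRingEnd ℂ) (U (glue S a e) i))).re := by
    rw [enumA, trace_sq_re]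
    exact Finset.sum_congr rfl fun a _ => Finset.sum_congr rfl fun b _ => by rw [hM a b, hM b a]
  -- reduction of enumB
  set e₁ : {i : Fin n // i ∈ Sᶜ} ≃ {i : Fin n // i ∉ S} :=
    Equiv.subtypeEquivRight (fun i => Finset.mem_compl) with he₁
  set e₂ : {i : Fin n // i ∉ Sᶜ} ≃ {i : Fin n // i ∈ S} :=
    Equiv.subtypeEquivRight (fun i => by simp) with he₂
  set Φ : ({i : Fin n // i ∉ S} → Fin d) ≃ ({i : Fin n // i ∈ Sᶜ} → Fin d) :=
    Equiv.arrowCongr e₁.symm (Equiv.refl (Fin d)) with hΦ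
  set Ψ : ({i : Fin n // i ∉ Sᶜ} → Fin d) ≃ ({i : Fin n // i ∈ S} → Fin d) :=
    Equiv.arrowCongr e₂ (Equiv.refl (Fin d)) with hΨ
  have hΦapp : ∀ (e : {i : Fin n // i ∉ S} → Fin d),
      Φ e = fun x : {i : Fin n // i ∈ Sᶜ} => e ⟨x.1, Finset.mem_compl.mp x.2⟩ := by
    intro e; funext x; rfl
  have hN : ∀ (e f : {i : Fin n // i ∉ S} → Fin d),
      optrace Sᶜ P (Φ e) (Φ f)
        = ∑ i, (lam i : ℂ) * ∑ a, U (glue S a e) i * (starRingEnd ℂ) (U (glue S a f) i) := by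
    intro e f
    have hsum : optrace Sᶜ P (Φ e) (Φ f)
        = ∑ a : {i : Fin n // i ∈ S} → Fin d, P (glue S a e) (glue S a f) := by
      calc optrace Sᶜ P (Φ e) (Φ f)
          = ∑ γ : {i : Fin n // i ∉ Sᶜ} → Fin d, P (glue Sᶜ (Φ e) γ) (glue Sᶜ (Φ f) γ) := rfl
        _ = ∑ a : {i : Fin n // i ∈ S} → Fin d, P (glue S a e) (glue S a f) := by
            refine Fintype.sum_equiv Ψ _ _ ?_
            intro γ
            have hγ : (fun x : {i : Fin n // i ∉ Sᶜ} => (Ψ γ) ⟨x.1, by simpa using x.2⟩) = γ := by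
              funext x
              exact congrArg γ (Subtype.ext rfl)
            rw [← glue_compl S (Ψ γ) e, ← glue_compl S (Ψ γ) f, hΦapp e, hΦapp f, hγ]
    rw [hsum]
    calc ∑ a : {i : Fin n // i ∈ S} → Fin d, P (glue S a e) (glue S a f)
        = ∑ a, ∑ i, (lam i : ℂ) * (U (glue S a e) i * (starRingEnd ℂ) (U (glue S a f) i)) :=
          Finset.sum_congr rfl fun a _ => hdec _ _
      _ = ∑ i, ∑ a, (lam i : ℂ) * (U (glue S a e) i * (starRingEnd ℂ) (U (glue S a f) i)) :=
          Finset.sum_comm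
      _ = _ := Finset.sum_congr rfl fun i _ => (Finset.mul_sum _ _ _).symm
  have hBred : enumB S P = ∑ e, ∑ f,
      ((∑ i, (lam i : ℂ) * ∑ a, U (glue S a e) i * (starRingEnd ℂ) (U (glue S a f) i)) *
        (∑ i, (lam i : ℂ) * ∑ a, U (glue S a f) i * (starRingEnd ℂ) (U (glue S a e) i))).re := by
    rw [enumB, trace_sq_re]
    rw [← Equiv.sum_comp Φ (fun α => ∑ β, (optrace Sᶜ P α β * optrace Sᶜ P β α).re)]
    refine Finset.sum_congr rfl fun e _ => ?_
    rw [← Equiv.sum_comp Φ (fun β => (optrace Sᶜ P (Φ e) β * optrace Sᶜ P β (Φ e)).re)]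
    refine Finset.sum_congr rfl fun f _ => ?_
    rw [hN e f, hN f e]
  have hcore := core (fun i a e => U (glue S a e) i) lam hidem ((K : ℕ) : ℝ) htr
  rw [sub_nonneg, hAred, hBred]
  exact hcore

end ApproxKUniform
end
end
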